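/- arXiv:2011.03887 — 5 statements merged into one kernel-verified Lean document; each statement's English description precedes it below -/
import Mathlib

section
/- Let n be a positive integer and let R = ℤ[X]/(X^n). For every positive integer k, the number of ideals I of R such that R/I is finite with exactly k elements equals the sum, over all n-tuples (m_1, m_2, ..., m_n) of positive integers satisfying m_1^1 · m_2^2 · ... · m_n^n = k, of the products m_1^0 · m_2^1 · ... · m_n^{n-1}. (Equivalently, the ideal zeta function of ℤ[X]/(X^n) equals ζ(s)ζ(2s−1)ζ(3s−2)···ζ(ns−(n−1)) as a formal Dirichlet series.) -/
/-- `idealCount R k` is the number of ideals `I` of `R` such that `R ⧸ I` is finite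
with exactly `k` elements. -/
noncomputable def idealCount (R : Type) [CommRing R] (k : ℕ) : ℕ :=
  Set.ncard {I : Ideal R | Nat.card (R ⧸ I) = k}

/-!
For an ideal `J` of `ℤ[X]` containing `X ^ n`, let `c_j ⊆ ℤ` be the ideal of constant
coefficients of `J : X ^ j`. Splitting off the constant term gives
`[ℤ[X] : J] = [ℤ : c_0] · [ℤ[X] : J : X]`, so with the jumps `m_j = [c_{j+1} : c_j]` of the chain
`c_0 ⊆ c_1 ⊆ ⋯ ⊆ c_n = ℤ` the index of `J` is `∏ m_j ^ (j + 1)`.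

The ideals `J` with given jumps are counted along `J ↦ J : X`. Over a fixed `K = J : X`, the
ideals with `c_0(J) = (d)` are exactly the `X K + (v)` with `v ∈ K`, `v(0) = d`, and `v` matters
only modulo `X K`. Fixing one such `v₀`, they are parametrised by `(K : X) / K`, whose order is
`[ℤ : c_0(K)] = m_1 ⋯ m_{n-1}`. Hence there are `∏ m_j ^ j` ideals with jumps `m`.
-/

lemma Set.ncard_eq_sum_ncard_inter_preimage {α β : Type*} {s : Set α} (f : α → β) {t : Finset β}
    (hst : Set.MapsTo f s t) (hfin : ∀ b ∈ t, (s ∩ f ⁻¹' {b}).Finite) :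
    s.ncard = ∑ b ∈ t, (s ∩ f ⁻¹' {b}).ncard := by
  have hs : s = ⋃ b ∈ (t : Set β), s ∩ f ⁻¹' {b} := by
    ext a
    simpa using fun ha => hst ha
  rw [← finsum_mem_coe_finset, ← Set.Finite.ncard_biUnion t.finite_toSet hfin, ← hs]
  exact fun b _ b' _ hbb' => Set.disjoint_left.2 fun a ha ha' => hbb' (ha.2.symm.trans ha'.2)

lemma AddSubgroup.ncard_eq_relIndex_of_fibers {G α : Type*} [AddGroup G] {H L : AddSubgroup G}
    {s : Set α} (φ : L → α) (hmaps : ∀ a, φ a ∈ s) (hsurj : ∀ x ∈ s, ∃ a, φ a = x)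
    (hfib : ∀ a b, φ a = φ b ↔ -(a : G) + b ∈ H) : s.ncard = H.relIndex L := by
  let ψ : L → s := fun a => ⟨φ a, hmaps a⟩
  have hψ : Function.Surjective ψ := fun x => by
    obtain ⟨a, ha⟩ := hsurj x x.2
    exact ⟨a, Subtype.ext ha⟩
  have hker : Setoid.ker ψ = QuotientAddGroup.leftRel (H.addSubgroupOf L) := by
    ext a b
    rw [Setoid.ker_def, QuotientAddGroup.leftRel_apply, AddSubgroup.mem_addSubgroupOf,
      Subtype.ext_iff]
    exact hfib a b
  rw [← Nat.card_coe_set_eq, ← Nat.card_congr (Setoid.quotientKerEquivOfSurjective ψ hψ), hker]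
  rfl

lemma idealCount_eq_ncard_of_surjective {A B : Type} [CommRing A] [CommRing B] (f : A →+* B)
    (hf : Function.Surjective f) (k : ℕ) :
    idealCount B k = {J : Ideal A | RingHom.ker f ≤ J ∧ Nat.card (A ⧸ J) = k}.ncard := by
  have hcard (I : Ideal B) : Nat.card (A ⧸ I.comap f) = Nat.card (B ⧸ I) :=
    AddSubgroup.index_comap_of_surjective I.toAddSubgroup (f := f.toAddMonoidHom) hf
  rw [idealCount, ← Set.ncard_image_of_injective _ (Ideal.comap_injective_of_surjective f hf)]
  congr 1
  ext J
  constructor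
  · rintro ⟨I, hI, rfl⟩
    exact ⟨Ideal.comap_mono bot_le, (hcard I).trans hI⟩
  · rintro ⟨hJ, hJk⟩
    have hJ' : (J.map f).comap f = J := by
      rw [Ideal.comap_map_of_surjective' f hf, sup_eq_left.2 hJ]
    exact ⟨J.map f, by rwa [Set.mem_ofPred_eq, ← hcard, hJ'], hJ'⟩

lemma Int.ideal_eq_span_natCast_iff (I : Ideal ℤ) (a : ℕ) :
    I = Ideal.span {(a : ℤ)} ↔ Nat.card (ℤ ⧸ I) = a := by
  refine ⟨?_, fun h => h ▸ (Int.ideal_span_absNorm_eq_self I).symm⟩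
  rintro rfl
  rw [Nat.card_congr (Int.quotientSpanNatEquivZMod a).toEquiv, Nat.card_zmod]

open Polynomial

section CommRing

variable {R : Type*} [CommRing R]

noncomputable def colonX (J : Ideal R[X]) : Ideal R[X] := J.colon {X}

lemma mem_colonX {J : Ideal R[X]} {p : R[X]} : p ∈ colonX J ↔ X * p ∈ J := by
  rw [colonX, Submodule.mem_colon_singleton, smul_eq_mul, mul_comm]

lemma le_colonX (J : Ideal R[X]) : J ≤ colonX J := Ideal.le_colon

lemma X_pow_mem_colonX_iff {J : Ideal R[X]} {n : ℕ} : X ^ n ∈ colonX J ↔ X ^ (n + 1) ∈ J := by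
  rw [mem_colonX, pow_succ']

theorem card_quotient_eq_mul_card_quotient_colonX (J : Ideal R[X]) :
    Nat.card (R[X] ⧸ J) = Nat.card (R ⧸ J.map constantCoeff) * Nat.card (R[X] ⧸ colonX J) := by
  set A := J.toAddSubgroup
  set B := (Ideal.span {(X : R[X])}).toAddSubgroup
  have hsup : A ⊔ B = (J.map constantCoeff).toAddSubgroup.comap constantCoeff.toAddMonoidHom := by
    rw [← Submodule.sup_toAddSubgroup, ← ker_constantCoeff,
      ← Ideal.comap_map_of_surjective' (constantCoeff : R[X] →+* R) constantCoeff_surjective]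
    rfl
  have hcolon : A.comap (AddMonoidHom.mulLeft X) = (colonX J).toAddSubgroup := by
    ext p
    exact mem_colonX.symm
  have hrange : (⊤ : AddSubgroup R[X]).map (AddMonoidHom.mulLeft X) = B := by
    ext p
    simp [B, Ideal.mem_span_singleton', mul_comm]
  have hrel : A.relIndex (A ⊔ B) = Nat.card (R[X] ⧸ colonX J) := by
    rw [AddSubgroup.relIndex_sup_left, ← hrange, ← AddSubgroup.relIndex_comap, hcolon,
      AddSubgroup.relIndex_top_right]
    rfl
  have hidx : (A ⊔ B).index = Nat.card (R ⧸ J.map constantCoeff) := by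
    rw [hsup, AddSubgroup.index_comap_of_surjective _ constantCoeff_surjective]
    rfl
  rw [mul_comm, ← hrel, ← hidx]
  exact (AddSubgroup.relIndex_mul_index le_sup_left).symm

lemma relIndex_colonX {K : Ideal R[X]} (hK : Nat.card (R[X] ⧸ K) ≠ 0) :
    K.toAddSubgroup.relIndex (colonX K).toAddSubgroup = Nat.card (R ⧸ K.map constantCoeff) := by
  have h := card_quotient_eq_mul_card_quotient_colonX K
  have hcolon : Nat.card (R[X] ⧸ colonX K) ≠ 0 := right_ne_zero_of_mul (h ▸ hK)
  apply Nat.eq_of_mul_eq_mul_right (Nat.pos_of_ne_zero hcolon)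
  rw [← h]
  exact AddSubgroup.relIndex_mul_index (le_colonX K)

noncomputable def coeffJumps (n : ℕ) (J : Ideal R[X]) : Fin n → ℕ := fun i =>
  ((colonX^[i] J).map constantCoeff).toAddSubgroup.relIndex
    ((colonX^[i + 1] J).map constantCoeff).toAddSubgroup

lemma coeffJumps_succ (n : ℕ) (J : Ideal R[X]) :
    coeffJumps (n + 1) J = Fin.cons
      ((J.map constantCoeff).toAddSubgroup.relIndex ((colonX J).map constantCoeff).toAddSubgroup)
      (coeffJumps n (colonX J)) := by
  ext i
  cases i using Fin.cases <;> rfl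

theorem card_quotient_map_constantCoeff_eq_prod (n : ℕ) {J : Ideal R[X]} (h : X ^ n ∈ J) :
    Nat.card (R ⧸ J.map constantCoeff) = ∏ i, coeffJumps n J i := by
  induction n generalizing J with
  | zero => simp [(Ideal.eq_top_iff_one J).2 (by simpa using h), Ideal.map_top]
  | succ n ih =>
    rw [coeffJumps_succ, Fin.prod_univ_succ]
    simp only [Fin.cons_zero, Fin.cons_succ]
    rw [← ih (X_pow_mem_colonX_iff.2 h)]
    exact (AddSubgroup.relIndex_mul_index (Ideal.map_mono (le_colonX J))).symm

theorem card_quotient_eq_prod_coeffJumps (n : ℕ) {J : Ideal R[X]} (h : X ^ n ∈ J) :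
    Nat.card (R[X] ⧸ J) = ∏ i : Fin n, coeffJumps n J i ^ ((i : ℕ) + 1) := by
  induction n generalizing J with
  | zero => simp [(Ideal.eq_top_iff_one J).2 (by simpa using h)]
  | succ n ih =>
    rw [card_quotient_eq_mul_card_quotient_colonX, card_quotient_map_constantCoeff_eq_prod _ h,
      ih (X_pow_mem_colonX_iff.2 h), Fin.prod_univ_succ, Fin.prod_univ_succ]
    simp only [coeffJumps_succ, Fin.cons_zero, Fin.cons_succ, Fin.val_zero, Fin.val_succ,
      pow_succ _ ((_ : ℕ) + 1), Finset.prod_mul_distrib]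
    ring

lemma coeffJumps_mem_filter {n k : ℕ} (hk : 0 < k) {J : Ideal R[X]} (hJ : X ^ n ∈ J)
    (hJk : Nat.card (R[X] ⧸ J) = k) :
    coeffJumps n J ∈ (Finset.Icc (fun _ => 1) (fun _ => k) : Finset (Fin n → ℕ)).filter
      (fun m => ∏ i, m i ^ (i.1 + 1) = k) := by
  rw [card_quotient_eq_prod_coeffJumps n hJ] at hJk
  have hdvd (i : Fin n) : coeffJumps n J i ∣ k := hJk ▸
    (dvd_pow_self _ (Nat.succ_ne_zero _)).trans (Finset.dvd_prod_of_mem _ (Finset.mem_univ i))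
  simp only [Finset.mem_filter, Finset.mem_Icc, Pi.le_def]
  exact ⟨⟨fun i => Nat.pos_of_dvd_of_pos (hdvd i) hk, fun i => Nat.le_of_dvd hk (hdvd i)⟩, hJk⟩

lemma mem_span_X_mul_sup_span_singleton_iff {K : Ideal R[X]} {v p : R[X]} (hv : v ∈ K) :
    p ∈ Ideal.span {X} * K ⊔ Ideal.span {v} ↔ ∃ t : R, ∃ κ ∈ K, p = C t * v + X * κ := by
  constructor
  · intro hp
    obtain ⟨a, ha, b, hb, rfl⟩ := Submodule.mem_sup.1 hp
    obtain ⟨κ, hκ, rfl⟩ := Ideal.mem_span_singleton_mul.1 ha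
    obtain ⟨q, rfl⟩ := Ideal.mem_span_singleton'.1 hb
    refine ⟨q.coeff 0, κ + q.divX * v, add_mem hκ (K.mul_mem_left _ hv), ?_⟩
    conv_lhs => rw [← X_mul_divX_add q]
    ring
  · rintro ⟨t, κ, hκ, rfl⟩
    exact add_comm (X * κ) _ ▸ Submodule.add_mem_sup
      (Ideal.mem_span_singleton_mul.2 ⟨κ, hκ, rfl⟩)
      (Ideal.mul_mem_left _ _ (Ideal.mem_span_singleton_self v))

lemma X_mul_mem_span_X_mul_iff {K : Ideal R[X]} {p : R[X]} :
    X * p ∈ Ideal.span {X} * K ↔ p ∈ K := by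
  rw [Ideal.mem_span_singleton_mul]
  exact ⟨fun ⟨κ, hκ, h⟩ => isRegular_X.left h ▸ hκ, fun hp => ⟨p, hp, rfl⟩⟩

lemma map_constantCoeff_span_X_mul_sup (K : Ideal R[X]) (v : R[X]) :
    (Ideal.span {X} * K ⊔ Ideal.span {v}).map constantCoeff = Ideal.span {constantCoeff v} := by
  simp [Ideal.map_sup, Ideal.map_mul, Ideal.map_span]

lemma colonX_span_X_mul_sup {K : Ideal R[X]} {v : R[X]} (hv : v ∈ K)
    (hv₀ : constantCoeff v ∈ nonZeroDivisors R) :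
    colonX (Ideal.span {X} * K ⊔ Ideal.span {v}) = K := by
  ext q
  rw [mem_colonX, mem_span_X_mul_sup_span_singleton_iff hv]
  constructor
  · rintro ⟨t, κ, hκ, h⟩
    have ht : t = 0 := by
      have := congrArg constantCoeff h
      simp only [map_mul, map_add, constantCoeff_apply, coeff_X_zero, zero_mul, coeff_C_zero,
        add_zero] at this
      exact (mul_right_mem_nonZeroDivisors_eq_zero_iff hv₀).1 this.symm
    rw [ht, C_0, zero_mul, zero_add] at h
    exact isRegular_X.left h ▸ hκ
  · exact fun hq => ⟨0, q, hq, by simp⟩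

lemma span_X_mul_sup_le_of_sub_mem {K : Ideal R[X]} {v w : R[X]}
    (h : w - v ∈ Ideal.span {X} * K) :
    Ideal.span {X} * K ⊔ Ideal.span {w} ≤ Ideal.span {X} * K ⊔ Ideal.span {v} := by
  refine sup_le le_sup_left ((Ideal.span_singleton_le_iff_mem _).2 ?_)
  rw [← add_sub_cancel v w]
  exact add_mem (Ideal.mem_sup_right (Ideal.mem_span_singleton_self v)) (Ideal.mem_sup_left h)

lemma span_X_mul_sup_eq_iff {K : Ideal R[X]} {v w : R[X]} (hv : v ∈ K)
    (hv₀ : constantCoeff v ∈ nonZeroDivisors R) (hvw : constantCoeff v = constantCoeff w) :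
    Ideal.span {X} * K ⊔ Ideal.span {v} = Ideal.span {X} * K ⊔ Ideal.span {w} ↔
      w - v ∈ Ideal.span {X} * K := by
  refine ⟨fun h => ?_, fun h => le_antisymm ?_ (span_X_mul_sup_le_of_sub_mem h)⟩
  · have hw : w ∈ Ideal.span {X} * K ⊔ Ideal.span {v} :=
      h ▸ Ideal.mem_sup_right (Ideal.mem_span_singleton_self w)
    obtain ⟨t, κ, hκ, rfl⟩ := (mem_span_X_mul_sup_span_singleton_iff hv).1 hw
    have ht : t = 1 := by
      have h0 : (t - 1) * constantCoeff v = 0 := by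
        rw [sub_mul, one_mul, sub_eq_zero]
        simpa using hvw.symm
      exact sub_eq_zero.1 ((mul_right_mem_nonZeroDivisors_eq_zero_iff hv₀).1 h0)
    rw [ht, C_1, one_mul, add_sub_cancel_left]
    exact X_mul_mem_span_X_mul_iff.2 hκ
  · exact span_X_mul_sup_le_of_sub_mem (by rw [← neg_sub]; exact neg_mem h)

lemma eq_span_X_mul_colonX_sup {J : Ideal R[X]} {v : R[X]} (hv : v ∈ J)
    (hJ : J.map constantCoeff = Ideal.span {constantCoeff v}) :
    J = Ideal.span {X} * colonX J ⊔ Ideal.span {v} := by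
  refine le_antisymm (fun p hp => ?_) (sup_le ?_ ((Ideal.span_singleton_le_iff_mem _).2 hv))
  · obtain ⟨t, ht⟩ : ∃ t, t * constantCoeff v = constantCoeff p := by
      rw [← Ideal.mem_span_singleton', ← hJ]
      exact Ideal.mem_map_of_mem _ hp
    obtain ⟨q, hq⟩ : X ∣ p - C t * v := by
      rw [constantCoeff_apply, constantCoeff_apply] at ht
      simp [X_dvd_iff, ht]
    rw [mem_span_X_mul_sup_span_singleton_iff (le_colonX J hv)]
    refine ⟨t, q, mem_colonX.2 (hq ▸ sub_mem hp (J.mul_mem_left _ hv)), ?_⟩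
    rw [← hq]
    ring
  · exact Ideal.span_singleton_mul_le_iff.2 fun q hq => mem_colonX.1 hq

theorem ncard_setOf_colonX_eq_and_map_constantCoeff_eq {K : Ideal R[X]} {d : R}
    (hK : Nat.card (R[X] ⧸ K) ≠ 0) (hd : d ∈ nonZeroDivisors R) (hdK : d ∈ K.map constantCoeff) :
    {J : Ideal R[X] | colonX J = K ∧ J.map constantCoeff = Ideal.span {d}}.ncard =
      Nat.card (R ⧸ K.map constantCoeff) := by
  obtain ⟨v, hv, rfl⟩ := (Ideal.mem_map_iff_of_surjective _ constantCoeff_surjective).1 hdK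
  have hmem : ∀ a ∈ colonX K, v + X * a ∈ K := fun a ha => add_mem hv (mem_colonX.1 ha)
  have hcoeff : ∀ a, constantCoeff (v + X * a) = constantCoeff v := by simp
  rw [← relIndex_colonX hK]
  refine AddSubgroup.ncard_eq_relIndex_of_fibers
    (fun a => Ideal.span {X} * K ⊔ Ideal.span {v + X * (a : R[X])})
    (fun a => ⟨?_, ?_⟩) (fun J hJ => ?_) (fun a b => ?_)
  · exact colonX_span_X_mul_sup (hmem a a.2) ((hcoeff a).symm ▸ hd)
  · rw [map_constantCoeff_span_X_mul_sup, hcoeff]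
  · obtain ⟨hJK, hJd⟩ := hJ
    obtain ⟨w, hw, hwv⟩ := (Ideal.mem_map_iff_of_surjective _ constantCoeff_surjective).1
      (hJd ▸ Ideal.mem_span_singleton_self _)
    obtain ⟨a, ha⟩ : X ∣ w - v := by
      rw [constantCoeff_apply, constantCoeff_apply] at hwv
      simp [X_dvd_iff, hwv]
    have haK : a ∈ colonX K := mem_colonX.2 (ha ▸ sub_mem (hJK ▸ le_colonX J hw) hv)
    refine ⟨⟨a, haK⟩, ?_⟩
    dsimp only
    rw [← ha, add_sub_cancel, ← hJK, ← eq_span_X_mul_colonX_sup hw (hwv ▸ hJd)]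
  · rw [span_X_mul_sup_eq_iff (hmem a a.2) ((hcoeff a).symm ▸ hd) (by rw [hcoeff, hcoeff]),
      add_sub_add_left_eq_sub, ← mul_sub, X_mul_mem_span_X_mul_iff, neg_add_eq_sub,
      Submodule.mem_toAddSubgroup]

end CommRing

lemma setOf_coeffJumps_succ_inter_colonX_preimage {n : ℕ} {m : Fin (n + 1) → ℕ}
    (hm : ∀ i, 0 < m i) {K : Ideal ℤ[X]} (hK : X ^ n ∈ K) (hKm : coeffJumps n K = Fin.tail m) :
    {J | X ^ (n + 1) ∈ J ∧ coeffJumps (n + 1) J = m} ∩ colonX ⁻¹' {K} =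
      {J | colonX J = K ∧ J.map constantCoeff =
        Ideal.span {((m 0 * Nat.card (ℤ ⧸ K.map constantCoeff) : ℕ) : ℤ)}} := by
  have he : Nat.card (ℤ ⧸ K.map constantCoeff) ≠ 0 := by
    rw [card_quotient_map_constantCoeff_eq_prod n hK, hKm]
    exact Finset.prod_ne_zero_iff.2 fun i _ => (hm _).ne'
  have hmul {J : Ideal ℤ[X]} (hJK : colonX J = K) :
      (J.map constantCoeff).toAddSubgroup.relIndex (K.map constantCoeff).toAddSubgroup *
        Nat.card (ℤ ⧸ K.map constantCoeff) = Nat.card (ℤ ⧸ J.map constantCoeff) :=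
    AddSubgroup.relIndex_mul_index (Ideal.map_mono (hJK ▸ le_colonX J))
  ext J
  simp only [Set.mem_inter_iff, Set.mem_ofPred_eq, Set.mem_preimage, Set.mem_singleton_iff,
    Int.ideal_eq_span_natCast_iff]
  refine ⟨fun ⟨⟨_, hJm⟩, hJK⟩ => ⟨hJK, ?_⟩, fun ⟨hJK, hJd⟩ => ⟨⟨?_, ?_⟩, hJK⟩⟩
  · rw [← hmul hJK, ← hJm, coeffJumps_succ, hJK, Fin.cons_zero]
  · exact X_pow_mem_colonX_iff.1 (hJK ▸ hK)
  · conv_rhs => rw [← Fin.cons_self_tail m]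
    rw [coeffJumps_succ, hJK, hKm, Fin.cons_inj]
    exact ⟨Nat.eq_of_mul_eq_mul_right (Nat.pos_of_ne_zero he) ((hmul hJK).trans hJd), rfl⟩

lemma ncard_setOf_coeffJumps_succ_inter_colonX_preimage {n : ℕ} {m : Fin (n + 1) → ℕ}
    (hm : ∀ i, 0 < m i) {K : Ideal ℤ[X]} (hK : X ^ n ∈ K) (hKm : coeffJumps n K = Fin.tail m) :
    ({J | X ^ (n + 1) ∈ J ∧ coeffJumps (n + 1) J = m} ∩ colonX ⁻¹' {K}).ncard =
      ∏ i : Fin n, m i.succ := by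
  have hcard := card_quotient_map_constantCoeff_eq_prod n hK
  rw [setOf_coeffJumps_succ_inter_colonX_preimage hm hK hKm,
    ncard_setOf_colonX_eq_and_map_constantCoeff_eq, hcard, hKm]
  · rfl
  · rw [card_quotient_eq_prod_coeffJumps n hK, hKm]
    exact (Finset.prod_pos fun i _ => pow_pos (hm _) _).ne'
  · rw [hcard, hKm]
    exact mem_nonZeroDivisors_of_ne_zero
      (Nat.cast_ne_zero.2 (Nat.mul_pos (hm 0) (Finset.prod_pos fun i _ => hm _)).ne')
  · rw [Nat.cast_mul]
    exact Ideal.mul_mem_left _ _ (Ideal.absNorm_mem _)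

theorem ncard_setOf_coeffJumps_eq (n : ℕ) (m : Fin n → ℕ) (hm : ∀ i, 0 < m i) :
    {J : Ideal ℤ[X] | X ^ n ∈ J ∧ coeffJumps n J = m}.ncard = ∏ i, m i ^ (i : ℕ) := by
  induction n with
  | zero =>
    have h : {J : Ideal ℤ[X] | X ^ 0 ∈ J ∧ coeffJumps 0 J = m} = {⊤} := by
      ext J
      simp [Ideal.eq_top_iff_one, Subsingleton.elim _ m]
    rw [h, Set.ncard_singleton]
    simp
  | succ n ih =>
    set T := {K : Ideal ℤ[X] | X ^ n ∈ K ∧ coeffJumps n K = Fin.tail m}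
    have hT : T.ncard = ∏ i : Fin n, m i.succ ^ (i : ℕ) := ih _ fun i => hm _
    have hTfin : T.Finite :=
      Set.finite_of_ncard_pos <| hT ▸ Finset.prod_pos fun i _ => pow_pos (hm _) _
    have hmaps : Set.MapsTo colonX {J | X ^ (n + 1) ∈ J ∧ coeffJumps (n + 1) J = m} T := by
      rintro J ⟨hJ, rfl⟩
      simpa [T, coeffJumps_succ] using X_pow_mem_colonX_iff.2 hJ
    have hfiber : ∀ K ∈ hTfin.toFinset, ({J | X ^ (n + 1) ∈ J ∧ coeffJumps (n + 1) J = m} ∩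
        colonX ⁻¹' {K}).ncard = ∏ i : Fin n, m i.succ := fun K hK =>
      ncard_setOf_coeffJumps_succ_inter_colonX_preimage hm (hTfin.mem_toFinset.1 hK).1
        (hTfin.mem_toFinset.1 hK).2
    rw [Set.ncard_eq_sum_ncard_inter_preimage colonX (by rwa [hTfin.coe_toFinset])
        fun K hK => Set.finite_of_ncard_pos (hfiber K hK ▸ Finset.prod_pos fun i _ => hm _),
      Finset.sum_congr rfl hfiber, Finset.sum_const, ← Set.ncard_eq_toFinset_card T hTfin, hT,
      smul_eq_mul, Fin.prod_univ_succ]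
    simp only [Fin.val_zero, pow_zero, one_mul, Fin.val_succ, pow_succ, Finset.prod_mul_distrib]

theorem ideal_count_int_poly_quot_pow_eq_general (n : ℕ) (k : ℕ) (hk : 0 < k) :
    idealCount (Polynomial ℤ ⧸ Ideal.span {(Polynomial.X : Polynomial ℤ) ^ n}) k =
      ∑ m ∈ (Finset.Icc (fun _ => 1) (fun _ => k) : Finset (Fin n → ℕ)).filter
          (fun m => ∏ i, m i ^ (i.1 + 1) = k),
        ∏ i, m i ^ (i.1 : ℕ) := by
  set M := (Finset.Icc (fun _ => 1) (fun _ => k) : Finset (Fin n → ℕ)).filter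
    (fun m => ∏ i, m i ^ (i.1 + 1) = k)
  have hfiber : ∀ m ∈ M, {J : Ideal ℤ[X] | X ^ n ∈ J ∧ Nat.card (ℤ[X] ⧸ J) = k} ∩
      coeffJumps n ⁻¹' {m} = {J | X ^ n ∈ J ∧ coeffJumps n J = m} := by
    refine fun m hm => Set.ext fun J => ⟨fun ⟨⟨hJ, _⟩, hJm⟩ => ⟨hJ, hJm⟩, fun ⟨hJ, hJm⟩ => ?_⟩
    refine ⟨⟨hJ, ?_⟩, hJm⟩
    rw [card_quotient_eq_prod_coeffJumps n hJ, hJm]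
    exact (Finset.mem_filter.1 hm).2
  have hpos : ∀ m ∈ M, ∀ i, 0 < m i := fun m hm => (Finset.mem_Icc.1 (Finset.mem_filter.1 hm).1).1
  have hcount : ∀ m ∈ M, ({J : Ideal ℤ[X] | X ^ n ∈ J ∧ Nat.card (ℤ[X] ⧸ J) = k} ∩
      coeffJumps n ⁻¹' {m}).ncard = ∏ i, m i ^ (i : ℕ) := fun m hm =>
    hfiber m hm ▸ ncard_setOf_coeffJumps_eq n m (hpos m hm)
  rw [idealCount_eq_ncard_of_surjective _ Ideal.Quotient.mk_surjective, Ideal.mk_ker]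
  simp only [Ideal.span_singleton_le_iff_mem]
  rw [Set.ncard_eq_sum_ncard_inter_preimage _ (fun J hJ => coeffJumps_mem_filter hk hJ.1 hJ.2)
    fun m hm => Set.finite_of_ncard_pos <|
      hcount m hm ▸ Finset.prod_pos fun i _ => pow_pos (hpos m hm i) _]
  exact Finset.sum_congr rfl hcount

/-- For `R = ℤ[X]/(X^n)`, the number of ideals of index `k` equals the sum over all
`n`-tuples `(m_1, …, m_n)` of positive integers with `m_1^1 ⋯ m_n^n = k` of
`m_1^0 ⋯ m_n^{n-1}`. -/
theorem ideal_count_int_poly_quot_pow_eq (n : ℕ) (hn : 0 < n) (k : ℕ) (hk : 0 < k) :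
    idealCount (Polynomial ℤ ⧸ Ideal.span {(Polynomial.X : Polynomial ℤ) ^ n}) k =
      ∑ m ∈ (Finset.Icc (fun _ => 1) (fun _ => k) : Finset (Fin n → ℕ)).filter
          (fun m => ∏ i, m i ^ (i.1 + 1) = k),
        ∏ i, m i ^ (i.1 : ℕ) :=
  ideal_count_int_poly_quot_pow_eq_general n k hk
end

section
/- Let R be a commutative ring with identity whose additive group is a free abelian group of finite rank n. Then for every positive integer k the number a_R(k) of ideals of R of index k is finite, and a_R is multiplicative: for all coprime positive integers m and k, a_R(mk) = a_R(m) · a_R(k). -/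
theorem Nat.Coprime.coprime_card_of_nsmul_eq_zero {A : Type*} [AddGroup A] [Finite A]
    {m k : ℕ} (h : m.Coprime k) (hA : ∀ x : A, m • x = 0) : (Nat.card A).Coprime k := by
  refine Nat.coprime_of_dvd fun p hp hpA hpk => ?_
  have := Fact.mk hp
  obtain ⟨x, hx⟩ := exists_prime_addOrderOf_dvd_card' p hpA
  exact hp.ne_one (Nat.eq_one_of_dvd_coprimes h (hx ▸ addOrderOf_dvd_of_nsmul_eq_zero (hA x)) hpk)

namespace Ideal

variable {R : Type*} [CommRing R]

theorem natCast_card_quotient_mem (I : Ideal R) : (Nat.card (R ⧸ I) : R) ∈ I := by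
  rw [← Quotient.eq_zero_iff_mem, map_natCast, ← nsmul_one]
  exact card_nsmul_eq_zero'

theorem nsmul_quotient_eq_zero {I : Ideal R} {m : ℕ} (hm : (m : R) ∈ I) (x : R ⧸ I) :
    m • x = 0 := by
  rw [nsmul_eq_mul, ← map_natCast (Quotient.mk I), Quotient.eq_zero_iff_mem.mpr hm, zero_mul]

theorem finite_quotient_span_natCast [Module.Finite ℤ R] {k : ℕ} (hk : k ≠ 0) :
    Finite (R ⧸ span {(k : R)}) :=
  Module.finite_of_fg_torsion _ fun x =>
    ⟨⟨k, mem_nonZeroDivisors_of_ne_zero (by exact_mod_cast hk)⟩, by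
      rw [Submonoid.smul_def, natCast_zsmul]
      exact nsmul_quotient_eq_zero (mem_span_singleton_self _) x⟩

theorem finite_setOf_card_quotient_eq [Module.Finite ℤ R] {k : ℕ} (hk : k ≠ 0) :
    {I : Ideal R | Nat.card (R ⧸ I) = k}.Finite := by
  have := finite_quotient_span_natCast (R := R) hk
  have : Finite (Ideal (R ⧸ span {(k : R)})) := Finite.of_injective _ SetLike.coe_injective
  refine (Set.finite_range (comap (Quotient.mk (span {(k : R)})))).subset ?_
  rintro I rfl
  refine ⟨I.map (Quotient.mk _), ?_⟩
  rw [comap_map_of_surjective' _ Quotient.mk_surjective, mk_ker, sup_eq_left,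
    span_singleton_le_iff_mem]
  exact natCast_card_quotient_mem I

theorem sup_eq_top_of_isCoprime {J₁ J₂ : Ideal R} {a b : R} (hab : IsCoprime a b)
    (ha : a ∈ J₁) (hb : b ∈ J₂) : J₁ ⊔ J₂ = ⊤ := by
  obtain ⟨u, v, huv⟩ := hab
  rw [eq_top_iff_one, ← huv]
  exact Submodule.add_mem_sup (J₁.mul_mem_left u ha) (J₂.mul_mem_left v hb)

theorem card_quotient_inf_of_sup_eq_top {J₁ J₂ : Ideal R} (h : J₁ ⊔ J₂ = ⊤) :
    Nat.card (R ⧸ J₁ ⊓ J₂) = Nat.card (R ⧸ J₁) * Nat.card (R ⧸ J₂) := by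
  rw [Nat.card_congr (quotientInfEquivQuotientProd J₁ J₂ (isCoprime_iff_sup_eq.mpr h)).toEquiv,
    Nat.card_prod]

theorem sup_inf_sup_eq_self {I A B : Ideal R} (hAB : A ⊔ B = ⊤) (hI : A * B ≤ I) :
    (I ⊔ A) ⊓ (I ⊔ B) = I := by
  have htop : (I ⊔ A) ⊔ (I ⊔ B) = ⊤ :=
    top_unique (hAB.ge.trans (sup_le_sup le_sup_right le_sup_right))
  refine le_antisymm ?_ (le_inf le_sup_left le_sup_left)
  rw [← mul_eq_inf_of_coprime htop, sup_mul, mul_sup A]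
  exact sup_le mul_le_left (sup_le mul_le_right hI)

theorem inf_sup_span_singleton_eq {J₁ J₂ : Ideal R} {a b : R} (hab : IsCoprime a b)
    (ha : a ∈ J₁) (hb : b ∈ J₂) : J₁ ⊓ J₂ ⊔ span {a} = J₁ := by
  rw [inf_sup_assoc_of_le _ ((span_singleton_le_iff_mem _).mpr ha),
    sup_eq_top_of_isCoprime hab.symm hb (mem_span_singleton_self a), inf_top_eq]

section NatCast

variable {I : Ideal R} {m k : ℕ}

theorem natCast_mem_of_card_quotient_eq (hI : Nat.card (R ⧸ I) = m) : (m : R) ∈ I :=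
  hI ▸ natCast_card_quotient_mem I

theorem sup_span_natCast_inf_sup_span_natCast (h : m.Coprime k) (hI : Nat.card (R ⧸ I) = m * k) :
    (I ⊔ span {(m : R)}) ⊓ (I ⊔ span {(k : R)}) = I := by
  refine sup_inf_sup_eq_self (sup_eq_top_of_isCoprime h.cast (mem_span_singleton_self _)
    (mem_span_singleton_self _)) ?_
  rw [span_singleton_mul_span_singleton, span_singleton_le_iff_mem, ← Nat.cast_mul]
  exact natCast_mem_of_card_quotient_eq hI

theorem card_quotient_sup_span_natCast (h : m.Coprime k) (hI : Nat.card (R ⧸ I) = m * k)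
    (hmk : m * k ≠ 0) : Nat.card (R ⧸ I ⊔ span {(m : R)}) = m := by
  have hm : (m : R) ∈ I ⊔ span {(m : R)} := mem_sup_right (mem_span_singleton_self _)
  have hk : (k : R) ∈ I ⊔ span {(k : R)} := mem_sup_right (mem_span_singleton_self _)
  have hcard :
      Nat.card (R ⧸ I ⊔ span {(m : R)}) * Nat.card (R ⧸ I ⊔ span {(k : R)}) = m * k := by
    rw [← card_quotient_inf_of_sup_eq_top (sup_eq_top_of_isCoprime h.cast hm hk),
      sup_span_natCast_inf_sup_span_natCast h hI, hI]
  have : Finite (R ⧸ I ⊔ span {(m : R)}) :=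
    Nat.finite_of_card_ne_zero (left_ne_zero_of_mul (hcard ▸ hmk))
  have : Finite (R ⧸ I ⊔ span {(k : R)}) :=
    Nat.finite_of_card_ne_zero (right_ne_zero_of_mul (hcard ▸ hmk))
  have hm' := h.coprime_card_of_nsmul_eq_zero (nsmul_quotient_eq_zero hm)
  have hk' := h.symm.coprime_card_of_nsmul_eq_zero (nsmul_quotient_eq_zero hk)
  exact Nat.dvd_antisymm (hm'.dvd_of_dvd_mul_right (Dvd.intro _ hcard))
    (hk'.symm.dvd_of_dvd_mul_right (Dvd.intro _ hcard.symm))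

end NatCast

variable (R) in
def cardQuotientMulEquiv {m k : ℕ} (h : m.Coprime k) (hmk : m * k ≠ 0) :
    {I : Ideal R | Nat.card (R ⧸ I) = m * k} ≃
      {I : Ideal R | Nat.card (R ⧸ I) = m} × {I : Ideal R | Nat.card (R ⧸ I) = k} where
  toFun I :=
    (⟨I ⊔ span {(m : R)}, card_quotient_sup_span_natCast h I.2 hmk⟩,
      ⟨I ⊔ span {(k : R)}, card_quotient_sup_span_natCast h.symm (I.2.trans (mul_comm m k))
        (mul_comm m k ▸ hmk)⟩)
  invFun J := ⟨J.1 ⊓ J.2, (card_quotient_inf_of_sup_eq_top (sup_eq_top_of_isCoprime h.cast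
      (natCast_mem_of_card_quotient_eq J.1.2) (natCast_mem_of_card_quotient_eq J.2.2))).trans
      (congrArg₂ (· * ·) J.1.2 J.2.2)⟩
  left_inv I := Subtype.ext (sup_span_natCast_inf_sup_span_natCast h I.2)
  right_inv J := by
    have hm := natCast_mem_of_card_quotient_eq J.1.2
    have hk := natCast_mem_of_card_quotient_eq J.2.2
    refine Prod.ext (Subtype.ext ?_) (Subtype.ext ?_)
    · exact inf_sup_span_singleton_eq h.cast hm hk
    · change J.1.1 ⊓ J.2.1 ⊔ span {(k : R)} = J.2.1
      rw [inf_comm]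
      exact inf_sup_span_singleton_eq h.symm.cast hk hm

end Ideal

theorem idealCount_mul {R : Type} [CommRing R] {m k : ℕ} (h : m.Coprime k) (hmk : m * k ≠ 0) :
    idealCount R (m * k) = idealCount R m * idealCount R k :=
  (Nat.card_congr (Ideal.cardQuotientMulEquiv R h hmk)).trans (Nat.card_prod _ _)

theorem ideal_count_finite_and_multiplicative_general (R : Type) [CommRing R]
    [Module.Finite ℤ R] :
    (∀ k : ℕ, 0 < k → {I : Ideal R | Nat.card (R ⧸ I) = k}.Finite) ∧
    (∀ m k : ℕ, 0 < m → 0 < k → Nat.Coprime m k →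
      idealCount R (m * k) = idealCount R m * idealCount R k) :=
  ⟨fun _ hk => Ideal.finite_setOf_card_quotient_eq hk.ne',
    fun _ _ hm hk h => idealCount_mul h (Nat.mul_ne_zero hm.ne' hk.ne')⟩

/-- If `R` is a commutative ring whose additive group is free abelian of finite rank `n`,
then `R` has finitely many ideals of each finite index, and `a_R` is multiplicative on
coprime arguments. -/
theorem ideal_count_finite_and_multiplicative (R : Type) [CommRing R]
    [Module.Free ℤ R] [Module.Finite ℤ R] (n : ℕ) (hrank : Module.finrank ℤ R = n) :
    (∀ k : ℕ, 0 < k → {I : Ideal R | Nat.card (R ⧸ I) = k}.Finite) ∧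
    (∀ m k : ℕ, 0 < m → 0 < k → Nat.Coprime m k →
      idealCount R (m * k) = idealCount R m * idealCount R k) :=
  ideal_count_finite_and_multiplicative_general R
end

section
/- Let p ≥ 1 and x be real numbers with 0 ≤ x and p^{j−1} x^j < 1 for all 1 ≤ j ≤ m, where m is a positive integer, and let B be a non-negative integer. Then the sum over all non-decreasing m-tuples of integers B ≤ c_1 ≤ c_2 ≤ ... ≤ c_m of the quantity p^{c_1 + c_2 + ... + c_{m−1}} · x^{c_1 + c_2 + ... + c_m} converges and equals (p^{m−1} x^m)^B · ∏_{j=1}^{m} (1 − p^{j−1} x^j)^{−1}. (Here for m = 1 the exponent of p in each summand is 0.) -/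
/-!
Write the summand as `∏ i, a i ^ c i` with `a = (p x, …, p x, x)`. Splitting off the smallest
entry `c 0 = B + d`, the remaining entries form a nondecreasing tuple bounded below by `B + d`,
and the summand factors as `a 0 ^ (B + d)` times a summand of length one less. By induction on
the length, the inner sum is `(a 1 ⋯ a (m-1)) ^ (B + d) ∏_{j ≥ 1} (1 - a j ⋯ a (m-1))⁻¹`, which
leaves a geometric series in `a 0 ⋯ a (m-1)`; all terms are nonnegative, so the iterated sum is
the sum. Hence the sum is `(a 0 ⋯ a (m-1)) ^ B ∏_j (1 - a j ⋯ a (m-1))⁻¹`, and the tail products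
are `a j ⋯ a (m-1) = p ^ (m-1-j) x ^ (m-j)`.
-/

open Finset

theorem Fin.monotone_cons {α : Type*} [Preorder α] {n : ℕ} {a : α} {f : Fin n → α} :
    Monotone (Fin.cons a f : Fin (n + 1) → α) ↔ (∀ i, a ≤ f i) ∧ Monotone f := by
  simp only [monotone_iff_forall_lt]
  exact Fin.liftFun_cons (· ≤ ·)

theorem HasSum.sigma_of_nonneg {α : Type*} {β : α → Type*} {f : (Σ x, β x) → ℝ}
    {g : α → ℝ} {s : ℝ} (hf : ∀ x, 0 ≤ f x) (hfib : ∀ x, HasSum (fun y => f ⟨x, y⟩) (g x))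
    (hg : HasSum g s) : HasSum f s :=
  hg.sigma_of_hasSum hfib <| (summable_sigma_of_nonneg hf).2
    ⟨fun x => (hfib x).summable, hg.summable.congr fun x => (hfib x).tsum_eq.symm⟩

/-- The bound is imposed on every entry, not only on `c 0`, so that the type also makes sense
for `m = 0`, where the induction starts. -/
abbrev MonotoneTupleGE (m B : ℕ) : Type :=
  {c : Fin m → ℕ // Monotone c ∧ ∀ i, B ≤ c i}

def MonotoneTupleGE.consEquiv (k B : ℕ) :
    (Σ d : ℕ, MonotoneTupleGE k (B + d)) ≃ MonotoneTupleGE (k + 1) B where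
  toFun s := ⟨Fin.cons (B + s.1) s.2.1, Fin.monotone_cons.2 ⟨s.2.2.2, s.2.2.1⟩,
    Fin.cases (Nat.le_add_right B s.1) fun i => (Nat.le_add_right B s.1).trans (s.2.2.2 i)⟩
  invFun c := ⟨c.1 0 - B, Fin.tail c.1,
    (Fin.monotone_cons.1 (Fin.cons_self_tail c.1 ▸ c.2.1)).2,
    fun i => by
      have := c.2.2 0
      have := c.2.1 (Fin.zero_le i.succ)
      simp only [Fin.tail]
      omega⟩
  left_inv s := Sigma.subtype_ext (by simp) (by simp)
  right_inv c := Subtype.ext <| by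
    have := c.2.2 0
    simp [Nat.add_sub_cancel' this]

def MonotoneTupleGE.equivLeFirst {m : ℕ} (hm : 0 < m) (B : ℕ) :
    {c : Fin m → ℕ // Monotone c ∧ B ≤ c ⟨0, hm⟩} ≃ MonotoneTupleGE m B :=
  Equiv.subtypeEquivRight fun _ => and_congr_right fun hc =>
    ⟨fun h i => h.trans (hc (Nat.zero_le i.val)), fun h => h _⟩

theorem MonotoneTupleGE.prod_pow_consEquiv {M : Type*} [CommMonoid M] {k B : ℕ}
    (a : Fin (k + 1) → M) (d : ℕ) (c : MonotoneTupleGE k (B + d)) :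
    ∏ i, a i ^ (consEquiv k B ⟨d, c⟩).1 i = a 0 ^ (B + d) * ∏ i, a i.succ ^ c.1 i := by
  simp [consEquiv, Fin.prod_univ_succ]

theorem hasSum_prod_pow_monotoneTupleGE {k : ℕ} (a : Fin k → ℝ) (ha : ∀ i, 0 ≤ a i)
    (hlt : ∀ j, ∏ i ∈ Ici j, a i < 1) (B : ℕ) :
    HasSum (fun c : MonotoneTupleGE k B => ∏ i, a i ^ c.1 i)
      ((∏ i, a i) ^ B * ∏ j, (1 - ∏ i ∈ Ici j, a i)⁻¹) := by
  induction k generalizing B with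
  | zero =>
    simp only [univ_eq_empty, prod_empty, one_pow, mul_one]
    exact hasSum_single ⟨Fin.elim0, fun i => i.elim0, fun i => i.elim0⟩
      fun c hc => (hc (Subsingleton.elim _ _)).elim
  | succ k ih =>
    set R := ∏ i, a i
    set P := ∏ j : Fin k, (1 - ∏ i ∈ Ici j, a i.succ)⁻¹
    have hR : R = a 0 * ∏ i : Fin k, a i.succ := Fin.prod_univ_succ a
    have hR1 : R < 1 := by simpa only [Ici_zero_eq_univ] using hlt 0
    have hfib (d : ℕ) : HasSum (fun c : MonotoneTupleGE k (B + d) =>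
        ∏ i, a i ^ (MonotoneTupleGE.consEquiv k B ⟨d, c⟩).1 i) (R ^ (B + d) * P) := by
      simpa only [MonotoneTupleGE.prod_pow_consEquiv, hR, mul_pow, mul_assoc] using
        (ih (fun i => a i.succ) (fun i => ha _) (fun j => Fin.prod_Ici_succ a j ▸ hlt j.succ)
          (B + d)).mul_left (a 0 ^ (B + d))
    have hgeom : HasSum (fun d : ℕ => R ^ (B + d) * P) (R ^ B * (1 - R)⁻¹ * P) := by
      have hR0 : 0 ≤ R := prod_nonneg fun i _ => ha i
      simpa only [pow_add, mul_assoc] using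
        ((hasSum_geometric_of_lt_one hR0 hR1).mul_left (R ^ B)).mul_right P
    have htot := HasSum.sigma_of_nonneg
      (f := fun s => ∏ i, a i ^ (MonotoneTupleGE.consEquiv k B s).1 i)
      (fun s => prod_nonneg fun i _ => pow_nonneg (ha i) _) hfib hgeom
    have hval : R ^ B * ∏ j, (1 - ∏ i ∈ Ici j, a i)⁻¹ = R ^ B * (1 - R)⁻¹ * P := by
      rw [Fin.prod_univ_succ, Ici_zero_eq_univ, mul_assoc]
      simp only [Fin.prod_Ici_succ, P, R]
    rw [hval, ← (MonotoneTupleGE.consEquiv k B).hasSum_iff]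
    exact htot

section LastDistinguished

variable {M : Type*} [CommMonoid M] {k : ℕ} (x y : M)

theorem Fin.prod_Ici_ite_last (j : Fin (k + 1)) :
    ∏ i ∈ Ici j, (if i = Fin.last k then x else y) = y ^ (k - j) * x := by
  rw [← mul_prod_erase _ _ (mem_Ici.2 (Fin.le_last j)), if_pos rfl,
    prod_congr rfl fun i hi => if_neg (ne_of_mem_erase hi), Finset.prod_const,
    card_erase_of_mem (mem_Ici.2 (Fin.le_last j)), Fin.card_Ici, mul_comm]
  congr 2
  omega

theorem Fin.prod_pow_ite_last (c : Fin (k + 1) → ℕ) :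
    ∏ i, (if i = Fin.last k then x else y) ^ c i =
      y ^ (∑ i ∈ univ.erase (Fin.last k), c i) * x ^ c (Fin.last k) := by
  rw [← mul_prod_erase _ _ (mem_univ (Fin.last k)), if_pos rfl,
    prod_congr rfl fun i hi => by rw [if_neg (ne_of_mem_erase hi)], prod_pow_eq_pow_sum,
    mul_comm]

end LastDistinguished

theorem Fin.prod_univ_sub_eq_prod_range {M : Type*} [CommMonoid M] (f : ℕ → M) (n : ℕ) :
    ∏ j : Fin (n + 1), f (n - j) = ∏ j ∈ range (n + 1), f j := by
  rw [Fin.prod_univ_eq_prod_range (fun j => f (n - j)), ← prod_range_reflect f]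
  rfl

/-- Iterated geometric series identity: for `p ≥ 1`, `x ≥ 0` with `p^{j-1} x^j < 1` for
`1 ≤ j ≤ m`, and `B ∈ ℕ`, the sum of `p^{c_1 + ⋯ + c_{m-1}} x^{c_1 + ⋯ + c_m}` over all
nondecreasing tuples `B ≤ c_1 ≤ ⋯ ≤ c_m` equals
`(p^{m-1} x^m)^B ∏_{j=1}^m (1 - p^{j-1} x^j)⁻¹`. -/
theorem iterated_geometric_sum (p x : ℝ) (hp : 1 ≤ p) (hx : 0 ≤ x)
    (m : ℕ) (hm : 0 < m)
    (hsmall : ∀ j : ℕ, 1 ≤ j → j ≤ m → p ^ (j - 1) * x ^ j < 1) (B : ℕ) :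
    HasSum
      (fun c : {c : Fin m → ℕ // Monotone c ∧ B ≤ c ⟨0, hm⟩} =>
        p ^ (∑ i ∈ Finset.univ.erase (⟨m - 1, Nat.sub_lt hm Nat.one_pos⟩ : Fin m), c.1 i) *
          x ^ (∑ i, c.1 i))
      ((p ^ (m - 1) * x ^ m) ^ B * ∏ j ∈ Finset.range m, (1 - p ^ j * x ^ (j + 1))⁻¹) := by
  obtain ⟨k, rfl⟩ : ∃ k, m = k + 1 := ⟨m - 1, by omega⟩
  let a : Fin (k + 1) → ℝ := fun i => if i = Fin.last k then x else p * x
  have ha (i : Fin (k + 1)) : 0 ≤ a i := by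
    dsimp only [a]
    split_ifs <;> positivity
  have htail (j : Fin (k + 1)) : ∏ i ∈ Ici j, a i = p ^ (k - j) * x ^ (k - j + 1) := by
    rw [Fin.prod_Ici_ite_last, mul_pow, pow_succ, mul_assoc]
  have hprod : ∏ i, a i = p ^ k * x ^ (k + 1) := by
    simpa using htail 0
  have hsum := hasSum_prod_pow_monotoneTupleGE a ha
    (fun j => by simpa [htail] using hsmall (k - j + 1) (by omega) (by omega)) B
  rw [← (MonotoneTupleGE.equivLeFirst hm B).hasSum_iff] at hsum
  convert hsum using 1
  · funext c
    show p ^ (∑ i ∈ univ.erase (Fin.last k), c.1 i) * x ^ (∑ i, c.1 i) = ∏ i, a i ^ c.1 i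
    rw [Fin.prod_pow_ite_last, ← sum_erase_add _ _ (mem_univ (Fin.last k)), pow_add, mul_pow]
    ring
  · simp only [hprod, htail, Nat.add_sub_cancel,
      Fin.prod_univ_sub_eq_prod_range (fun j => (1 - p ^ j * x ^ (j + 1))⁻¹)]
end

section
/- Let λ be a nonzero integer, let f(X) = X²(X−λ), let R = ℤ[X]/(f), and let p be a prime not dividing λ. Then for every non-negative integer l, the number of ideals I of R with R/I finite of cardinality p^l equals the sum, over all triples of non-negative integers (b_1, b_2, b_3) with b_2 ≤ b_1 and b_1 + b_2 + b_3 = l, of p^{b_1 − b_2 − ⌈(b_1 − b_2)/2⌉}. -/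
open Polynomial

namespace Ideal

variable {A B : Type*} [CommRing A] [CommRing B]

theorem natCast_mem_of_natCard_quotient_dvd {I : Ideal A} {n : ℕ}
    (h : Nat.card (A ⧸ I) ∣ n) : (n : A) ∈ I := by
  obtain ⟨k, rfl⟩ := h
  have hcard : (Nat.card (A ⧸ I) : A ⧸ I) = 0 := by
    rw [← nsmul_one]; exact card_nsmul_eq_zero'
  rw [← Quotient.eq_zero_iff_mem, map_natCast, Nat.cast_mul, hcard, zero_mul]

theorem natCard_quotient_comap {φ : A →+* B} (hφ : Function.Surjective φ) (J : Ideal B) :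
    Nat.card (A ⧸ J.comap φ) = Nat.card (B ⧸ J) :=
  Nat.card_congr (Equiv.ofBijective _ ⟨quotientMap_injective, quotientMap_surjective hφ⟩)

theorem natCard_quotient_inf {I J : Ideal A} (h : I ⊔ J = ⊤) :
    Nat.card (A ⧸ I ⊓ J) = Nat.card (A ⧸ I) * Nat.card (A ⧸ J) := by
  rw [← Nat.card_prod]
  exact Nat.card_congr (quotientInfEquivQuotientProd I J (isCoprime_iff_sup_eq.mpr h)).toEquiv

variable {g h c : A}

theorem sup_eq_top_of_span_eq_top (hgen : span {g, h, c} = ⊤) {J₁ J₂ : Ideal A}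
    (hg : g ∈ J₁ ⊔ J₂) (hh : h ∈ J₁ ⊔ J₂) (hc : c ∈ J₁ ⊔ J₂) : J₁ ⊔ J₂ = ⊤ :=
  top_le_iff.1 (hgen ▸ span_le.2 (by simp [Set.insert_subset_iff, hg, hh, hc]))

theorem inf_sup_span_singleton_eq_s12 (hgen : span {g, h, c} = ⊤) {J₁ J₂ : Ideal A}
    (hg : g ∈ J₁) (hh : h ∈ J₂) (hc : c ∈ J₂) : J₁ ⊓ J₂ ⊔ span {g} = J₁ := by
  have hsup : span {g} ⊔ J₂ = ⊤ := sup_eq_top_of_span_eq_top hgen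
    (mem_sup_left (mem_span_singleton_self g)) (mem_sup_right hh) (mem_sup_right hc)
  rw [sup_comm, inf_comm, ← sup_inf_assoc_of_le J₂ ((span_singleton_le_iff_mem _).2 hg), hsup,
    top_inf_eq]

theorem sup_span_singleton_inf_sup_span_singleton (hgen : span {g, h, c} = ⊤) {I : Ideal A}
    (hgh : g * h ∈ I) (hc : c ∈ I) : (I ⊔ span {g}) ⊓ (I ⊔ span {h}) = I := by
  have hsup : (I ⊔ span {g}) ⊔ (I ⊔ span {h}) = ⊤ := sup_eq_top_of_span_eq_top hgen
    (mem_sup_left (mem_sup_right (mem_span_singleton_self g)))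
    (mem_sup_right (mem_sup_right (mem_span_singleton_self h))) (mem_sup_left (mem_sup_left hc))
  refine le_antisymm ?_ (le_inf le_sup_left le_sup_left)
  rw [← mul_eq_inf_of_isCoprime (isCoprime_iff_sup_eq.2 hsup), sup_mul, mul_sup, mul_sup]
  refine sup_le (sup_le mul_le_left mul_le_left) (sup_le mul_le_right ?_)
  rwa [span_singleton_mul_span_singleton, span_singleton_le_iff_mem]

end Ideal

theorem idealCount_quotient {A : Type} [CommRing A] (K : Ideal A) (k : ℕ) :
    idealCount (A ⧸ K) k = {I : Ideal A | K ≤ I ∧ Nat.card (A ⧸ I) = k}.ncard := by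
  have hmk := Ideal.Quotient.mk_surjective (I := K)
  have himage : {I : Ideal A | K ≤ I ∧ Nat.card (A ⧸ I) = k}
      = Ideal.comap (Ideal.Quotient.mk K) '' {J | Nat.card ((A ⧸ K) ⧸ J) = k} := by
    ext I
    constructor
    · rintro ⟨hKI, hI⟩
      refine ⟨I.map (Ideal.Quotient.mk K), ?_, Ideal.comap_map_mk hKI⟩
      rwa [Set.mem_ofPred_eq, ← Ideal.natCard_quotient_comap hmk, Ideal.comap_map_mk hKI]
    · rintro ⟨J, hJ, rfl⟩
      refine ⟨?_, (Ideal.natCard_quotient_comap hmk J).trans hJ⟩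
      simpa only [Ideal.mk_ker] using Ideal.ker_le_comap (K := J) (Ideal.Quotient.mk K)
  rw [idealCount, himage, (Ideal.comap_injective_of_surjective _ hmk).injOn.ncard_image]

-- No finiteness is needed: for `I = ⊥` both sides are `⊥`, as `Nat.card ℤ = 0`.
theorem Int.ideal_eq_span_natCard (I : Ideal ℤ) : I = Ideal.span {(Nat.card (ℤ ⧸ I) : ℤ)} := by
  obtain ⟨g, rfl⟩ := (IsPrincipalIdealRing.principal I).principal
  change Ideal.span {g} = Ideal.span {(Nat.card (ℤ ⧸ Ideal.span {g}) : ℤ)}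
  rw [← Int.span_natAbs g, Int.card_ideal_quot]

theorem Polynomial.evalRingHom_surjective {R : Type*} [CommRing R] (x : R) :
    Function.Surjective (evalRingHom x) :=
  fun a => ⟨C a, eval_C⟩

theorem eq_comap_evalRingHom_of_X_sub_C_mem {lam : ℤ} {J : Ideal ℤ[X]} (hJ : X - C lam ∈ J) :
    J = (Ideal.span {(Nat.card (ℤ[X] ⧸ J) : ℤ)}).comap (evalRingHom lam) := by
  have hsurj := evalRingHom_surjective lam
  have hJ' : J = (J.map (evalRingHom lam)).comap (evalRingHom lam) := by
    rw [Ideal.comap_map_of_surjective _ hsurj, ← RingHom.ker_eq_comap_bot, ker_evalRingHom,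
      sup_eq_left.2 ((Ideal.span_singleton_le_iff_mem _).2 hJ)]
  rw [hJ', Ideal.natCard_quotient_comap hsurj, ← Int.ideal_eq_span_natCard]

theorem natCard_quotient_comap_evalRingHom (lam : ℤ) (n : ℕ) :
    Nat.card (ℤ[X] ⧸ (Ideal.span {(n : ℤ)}).comap (evalRingHom lam)) = n := by
  rw [Ideal.natCard_quotient_comap (evalRingHom_surjective lam), Int.card_ideal_quot]

theorem X_sub_C_mem_comap_evalRingHom (lam : ℤ) (K : Ideal ℤ) :
    X - C lam ∈ K.comap (evalRingHom lam) := by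
  simp

theorem exists_eq_C_add_C_mul_X_add_X_sq_mul {R : Type*} [CommRing R] (f : R[X]) :
    ∃ g, f = C (f.coeff 0) + C (f.coeff 1) * X + X ^ 2 * g := by
  obtain ⟨g, hg⟩ : X ^ 2 ∣ f - (C (f.coeff 0) + C (f.coeff 1) * X) := by
    rw [X_pow_dvd_iff]
    intro n hn
    interval_cases n <;> simp
  exact ⟨g, by linear_combination hg⟩

theorem Ideal.Quotient.mk_eq_mk_C_add_C_mul_X {R : Type*} [CommRing R] {I : Ideal R[X]}
    (hX : X ^ 2 ∈ I) (f : R[X]) :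
    Ideal.Quotient.mk I f = Ideal.Quotient.mk I (C (f.coeff 0) + C (f.coeff 1) * X) := by
  obtain ⟨g, hg⟩ := exists_eq_C_add_C_mul_X_add_X_sq_mul f
  rw [Ideal.Quotient.mk_eq_mk_iff_sub_mem, show f - (C (f.coeff 0) + C (f.coeff 1) * X) = X ^ 2 * g
    by linear_combination hg]
  exact I.mul_mem_right g hX

theorem Ideal.mem_iff_C_add_C_mul_X_mem {R : Type*} [CommRing R] {I : Ideal R[X]}
    (hX : X ^ 2 ∈ I) (f : R[X]) : f ∈ I ↔ C (f.coeff 0) + C (f.coeff 1) * X ∈ I := by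
  rw [← Ideal.Quotient.eq_zero_iff_mem, Ideal.Quotient.mk_eq_mk_C_add_C_mul_X hX,
    Ideal.Quotient.eq_zero_iff_mem]

noncomputable def hermiteIdeal (a d : ℕ) (c : ℤ) : Ideal ℤ[X] :=
  Ideal.span {C (a : ℤ) + C c * X, C (d : ℤ) * X, X ^ 2}

section hermiteIdeal

variable {a d : ℕ} {c : ℤ}

theorem X_sq_mem_hermiteIdeal : X ^ 2 ∈ hermiteIdeal a d c :=
  Ideal.subset_span (by simp)

theorem mem_hermiteIdeal_iff (hda : d ∣ a) {x y : ℤ} :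
    C x + C y * X ∈ hermiteIdeal a d c ↔ ∃ u v : ℤ, x = u * a ∧ y = u * c + v * d := by
  constructor
  · intro hxy
    obtain ⟨q₁, q₂, q₃, hq⟩ : ∃ q₁ q₂ q₃ : ℤ[X],
        q₁ * (C (a : ℤ) + C c * X) + q₂ * (C (d : ℤ) * X) + q₃ * X ^ 2 = C x + C y * X := by
      simpa [hermiteIdeal, Ideal.mem_span_insert, Ideal.mem_span_singleton', ← add_assoc,
        eq_comm] using hxy
    have h₀ := congrArg (coeff · 0) hq
    have h₁ := congrArg (coeff · 1) hq
    simp only [mul_add, ← mul_assoc, coeff_add, coeff_mul_C, coeff_mul_X, coeff_mul_X_pow',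
      coeff_C] at h₀ h₁
    norm_num at h₀ h₁
    obtain ⟨e, rfl⟩ := hda
    exact ⟨q₁.coeff 0, q₁.coeff 1 * e + q₂.coeff 0, by linear_combination -h₀, by
      push_cast at h₁ ⊢; linear_combination -h₁⟩
  · rintro ⟨u, v, rfl, rfl⟩
    rw [show C (u * a) + C (u * c + v * d) * X = C u * (C (a : ℤ) + C c * X) + C v * (C (d : ℤ) * X)
      by simp only [map_add, map_mul]; ring]
    exact add_mem (Ideal.mul_mem_left _ _ (Ideal.subset_span (by simp)))
      (Ideal.mul_mem_left _ _ (Ideal.subset_span (by simp)))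

theorem mk_C_add_C_mul_X_eq_iff (hda : d ∣ a) {x y x' y' : ℤ} :
    Ideal.Quotient.mk (hermiteIdeal a d c) (C x + C y * X)
        = Ideal.Quotient.mk (hermiteIdeal a d c) (C x' + C y' * X) ↔
      ∃ u v : ℤ, x - x' = u * a ∧ y - y' = u * c + v * d := by
  rw [Ideal.Quotient.mk_eq_mk_iff_sub_mem, ← mem_hermiteIdeal_iff hda, map_sub, map_sub]
  ring_nf

theorem natCard_quotient_hermiteIdeal (ha : 0 < a) (hda : d ∣ a) (c : ℤ) :
    Nat.card (ℤ[X] ⧸ hermiteIdeal a d c) = a * d := by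
  have hd : 0 < d := Nat.pos_of_dvd_of_pos hda ha
  let ψ : Fin a × Fin d → ℤ[X] ⧸ hermiteIdeal a d c := fun z =>
    Ideal.Quotient.mk _ (C ((z.1 : ℕ) : ℤ) + C ((z.2 : ℕ) : ℤ) * X)
  suffices Function.Bijective ψ by simpa using (Nat.card_eq_of_bijective ψ this).symm
  constructor
  · rintro ⟨x, y⟩ ⟨x', y'⟩ hxy
    obtain ⟨u, v, hu, hv⟩ := (mk_C_add_C_mul_X_eq_iff hda).1 hxy
    have hx : (x : ℕ) = x' := Nat.ModEq.eq_of_lt_of_lt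
      (Int.natCast_modEq_iff.1 (Int.modEq_iff_dvd.2 ⟨-u, by linear_combination -hu⟩)) x.2 x'.2
    have hu0 : u = 0 := by
      simpa [hx, ha.ne'] using hu
    rw [hu0, zero_mul, zero_add] at hv
    have hy : (y : ℕ) = y' := Nat.ModEq.eq_of_lt_of_lt
      (Int.natCast_modEq_iff.1 (Int.modEq_iff_dvd.2 ⟨-v, by linear_combination -hv⟩)) y.2 y'.2
    simp [hx, hy, Fin.ext_iff]
  · intro z
    obtain ⟨f, rfl⟩ := Ideal.Quotient.mk_surjective z
    set u := f.coeff 0 / a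
    set v := (f.coeff 1 - u * c) / d
    have hx := Int.emod_nonneg (f.coeff 0) (Int.natCast_ne_zero.2 ha.ne')
    have hy := Int.emod_nonneg (f.coeff 1 - u * c) (Int.natCast_ne_zero.2 hd.ne')
    have hx' := Int.emod_lt_of_pos (f.coeff 0) (Int.natCast_pos.2 ha)
    have hy' := Int.emod_lt_of_pos (f.coeff 1 - u * c) (Int.natCast_pos.2 hd)
    refine ⟨(⟨(f.coeff 0 % a).toNat, by omega⟩, ⟨((f.coeff 1 - u * c) % d).toNat, by omega⟩),
      ?_⟩
    rw [Ideal.Quotient.mk_eq_mk_C_add_C_mul_X X_sq_mem_hermiteIdeal f]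
    refine (mk_C_add_C_mul_X_eq_iff hda).2 ⟨-u, -v, ?_, ?_⟩
    · rw [Int.toNat_of_nonneg hx, Int.emod_def]; ring
    · rw [Int.toNat_of_nonneg hy, Int.emod_def]; ring

theorem mem_map_evalRingHom_zero_iff {J : Ideal ℤ[X]} (hX : X ^ 2 ∈ J) {x : ℤ} :
    x ∈ J.map (evalRingHom 0) ↔ ∃ y, C x + C y * X ∈ J := by
  rw [Ideal.mem_map_iff_of_surjective _ (evalRingHom_surjective 0)]
  constructor
  · rintro ⟨f, hf, rfl⟩
    exact ⟨f.coeff 1, by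
      rwa [coe_evalRingHom, ← coeff_zero_eq_eval_zero, ← Ideal.mem_iff_C_add_C_mul_X_mem hX]⟩
  · rintro ⟨y, hy⟩
    exact ⟨_, hy, by simp⟩

theorem mem_colon_X_iff {J : Ideal ℤ[X]} {y : ℤ} :
    y ∈ (J.restrictScalars ℤ).colon {X} ↔ C y * X ∈ J := by
  rw [Submodule.mem_colon_singleton, Submodule.restrictScalars_mem, smul_eq_C_mul]

theorem eq_hermiteIdeal {J : Ideal ℤ[X]} (hX : X ^ 2 ∈ J)
    (hG : J.map (evalRingHom 0) = Ideal.span {(a : ℤ)})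
    (hH : (J.restrictScalars ℤ).colon {X} = Ideal.span {(d : ℤ)})
    (hda : d ∣ a) (hc : C (a : ℤ) + C c * X ∈ J) : J = hermiteIdeal a d c := by
  apply le_antisymm
  · intro f hf
    rw [Ideal.mem_iff_C_add_C_mul_X_mem hX] at hf
    rw [Ideal.mem_iff_C_add_C_mul_X_mem X_sq_mem_hermiteIdeal, mem_hermiteIdeal_iff hda]
    obtain ⟨u, hu⟩ : (a : ℤ) ∣ f.coeff 0 := by
      rw [← Ideal.mem_span_singleton, ← hG, mem_map_evalRingHom_zero_iff hX]
      exact ⟨_, hf⟩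
    obtain ⟨v, hv⟩ : (d : ℤ) ∣ f.coeff 1 - u * c := by
      rw [← Ideal.mem_span_singleton, ← hH, mem_colon_X_iff]
      convert J.sub_mem hf (J.mul_mem_left (C u) hc) using 1
      rw [hu]
      simp only [map_sub, map_mul]
      ring
    exact ⟨u, v, by rw [hu]; ring, by linear_combination hv⟩
  · rw [hermiteIdeal, Ideal.span_le]
    simp only [Set.insert_subset_iff, Set.singleton_subset_iff, SetLike.mem_coe]
    exact ⟨hc, mem_colon_X_iff.1 (hH ▸ Ideal.mem_span_singleton_self _), hX⟩

theorem exists_eq_hermiteIdeal {J : Ideal ℤ[X]} (hX : X ^ 2 ∈ J)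
    (hJ : Nat.card (ℤ[X] ⧸ J) ≠ 0) :
    ∃ a d : ℕ, ∃ c : ℤ, 0 < a ∧ d ∣ a ∧ 0 ≤ c ∧ c < d ∧ J = hermiteIdeal a d c := by
  have hG := Int.ideal_eq_span_natCard (J.map (evalRingHom 0))
  have hH := Int.ideal_eq_span_natCard ((J.restrictScalars ℤ).colon {X})
  set a := Nat.card (ℤ ⧸ J.map (evalRingHom 0))
  set d := Nat.card (ℤ ⧸ (J.restrictScalars ℤ).colon {X})
  have hdH : C (d : ℤ) * X ∈ J := mem_colon_X_iff.1 (hH ▸ Ideal.mem_span_singleton_self _)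
  obtain ⟨β, hβ⟩ := (mem_map_evalRingHom_zero_iff hX).1 (hG ▸ Ideal.mem_span_singleton_self _)
  have hda : d ∣ a := by
    have haH : (a : ℤ) ∈ (J.restrictScalars ℤ).colon {X} := by
      rw [mem_colon_X_iff]
      convert J.sub_mem (J.mul_mem_left X hβ) (J.mul_mem_left (C β) hX) using 1
      ring
    rw [hH, Ideal.mem_span_singleton] at haH
    exact_mod_cast haH
  have ha : 0 < a := by
    have hn : (Nat.card (ℤ[X] ⧸ J) : ℤ) ∈ J.map (evalRingHom 0) :=
      (mem_map_evalRingHom_zero_iff hX).2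
        ⟨0, by simpa using Ideal.natCast_mem_of_natCard_quotient_dvd (dvd_refl _)⟩
    rw [hG, Ideal.mem_span_singleton] at hn
    exact Nat.pos_of_dvd_of_pos (Int.natCast_dvd_natCast.1 hn) (Nat.pos_of_ne_zero hJ)
  have hd : (0 : ℤ) < d := by exact_mod_cast Nat.pos_of_dvd_of_pos hda ha
  refine ⟨a, d, β % d, ha, hda, Int.emod_nonneg _ hd.ne', Int.emod_lt_of_pos _ hd,
    eq_hermiteIdeal hX hG hH hda ?_⟩
  convert J.sub_mem hβ (J.mul_mem_left (C (β / d)) hdH) using 1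
  rw [Int.emod_def]
  simp only [map_sub, map_mul]
  ring

theorem dvd_of_hermiteIdeal_le {a' d' : ℕ} {c' : ℤ} (ha : 0 < a) (hda : d ∣ a)
    (h : hermiteIdeal a' d' c' ≤ hermiteIdeal a d c) : a ∣ a' ∧ d ∣ d' := by
  obtain ⟨u, -, hu, -⟩ := (mem_hermiteIdeal_iff hda).1
    (h (Ideal.subset_span (by simp) : C (a' : ℤ) + C c' * X ∈ hermiteIdeal a' d' c'))
  obtain ⟨u', v', hu', hv'⟩ := (mem_hermiteIdeal_iff hda (x := 0) (y := d')).1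
    (by simpa using h (Ideal.subset_span (by simp) : C (d' : ℤ) * X ∈ hermiteIdeal a' d' c'))
  obtain rfl : u' = 0 := by simpa [ha.ne'] using hu'.symm
  exact ⟨Int.natCast_dvd_natCast.1 ⟨u, by linear_combination hu⟩,
    Int.natCast_dvd_natCast.1 ⟨v', by linear_combination hv'⟩⟩

theorem hermiteIdeal_inj {a' d' : ℕ} {c' : ℤ} (ha : 0 < a) (hda : d ∣ a) (ha' : 0 < a')
    (hda' : d' ∣ a') (hc : 0 ≤ c ∧ c < d) (hc' : 0 ≤ c' ∧ c' < d')
    (h : hermiteIdeal a d c = hermiteIdeal a' d' c') : a = a' ∧ d = d' ∧ c = c' := by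
  obtain ⟨haa', hdd'⟩ := dvd_of_hermiteIdeal_le ha hda h.ge
  obtain ⟨ha'a, hd'd⟩ := dvd_of_hermiteIdeal_le ha' hda' h.le
  obtain rfl := Nat.dvd_antisymm haa' ha'a
  obtain rfl := Nat.dvd_antisymm hdd' hd'd
  refine ⟨rfl, rfl, ?_⟩
  obtain ⟨u, v, hu, hv⟩ := (mem_hermiteIdeal_iff hda).1
    (h ▸ Ideal.subset_span (by simp) : C (a : ℤ) + C c' * X ∈ hermiteIdeal a d c)
  obtain rfl : u = 1 := by
    have : (u - 1) * a = 0 := by linear_combination -hu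
    simpa [ha.ne', sub_eq_zero] using this
  calc c = c % d := (Int.emod_eq_of_lt hc.1 hc.2).symm
    _ = c' % d := by rw [hv, one_mul, Int.add_mul_emod_self_right]
    _ = c' := Int.emod_eq_of_lt hc'.1 hc'.2

end hermiteIdeal

theorem span_X_sq_X_sub_C_natCast_pow_eq_top {lam : ℤ} {p : ℕ} (hcop : IsCoprime (p : ℤ) lam)
    (l : ℕ) : Ideal.span {X ^ 2, X - C lam, ((p ^ l : ℕ) : ℤ[X])} = ⊤ := by
  obtain ⟨u, v, huv⟩ := (hcop.pow_left (m := l)).pow_right (n := 2)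
  rw [Ideal.eq_top_iff_one]
  have h1 : (1 : ℤ[X])
      = C v * X ^ 2 + (-(C v * (X + C lam))) * (X - C lam) + C u * ((p ^ l : ℕ) : ℤ[X]) := by
    rw [← map_one C, ← huv]
    simp only [map_add, map_mul, map_pow, map_natCast, Nat.cast_pow]
    ring
  rw [h1]
  refine add_mem (add_mem ?_ ?_) ?_ <;> exact Ideal.mul_mem_left _ _ (Ideal.subset_span (by simp))

def indexTriples (l : ℕ) : Finset (ℕ × ℕ × ℕ) :=
  (Finset.range (l + 1) ×ˢ Finset.range (l + 1) ×ˢ Finset.range (l + 1)).filter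
    (fun b => b.2.1 ≤ b.1 ∧ b.1 + b.2.1 + b.2.2 = l)

theorem mem_indexTriples {l : ℕ} {b : ℕ × ℕ × ℕ} :
    b ∈ indexTriples l ↔ b.2.1 ≤ b.1 ∧ b.1 + b.2.1 + b.2.2 = l := by
  simp only [indexTriples, Finset.mem_filter, Finset.mem_product, Finset.mem_range]
  omega

theorem sum_indexTriples_pow_eq (p l : ℕ) :
    ∑ b ∈ indexTriples l, p ^ b.2.1
      = ∑ b ∈ indexTriples l, p ^ (b.1 - b.2.1 - (b.1 - b.2.1 + 1) / 2) := by
  let σ : ℕ × ℕ × ℕ → ℕ × ℕ × ℕ := fun b =>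
    (b.1 + b.2.1 - (b.1 - b.2.1) / 2, (b.1 - b.2.1) / 2, b.2.2)
  refine Finset.sum_nbij' σ σ ?_ ?_ ?_ ?_ ?_ <;> rintro ⟨b₁, b₂, b₃⟩ hb <;>
    simp only [mem_indexTriples, σ, Prod.mk.injEq, and_true] at hb ⊢
  any_goals omega
  congr 1
  omega

noncomputable def idealParams (p l : ℕ) : Finset (Σ _ : ℕ × ℕ × ℕ, ℤ) :=
  (indexTriples l).sigma fun b => Finset.Ico 0 ((p : ℤ) ^ b.2.1)

theorem mk_mem_idealParams {p l b₁ b₂ b₃ : ℕ} {c : ℤ} :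
    (⟨(b₁, b₂, b₃), c⟩ : Σ _ : ℕ × ℕ × ℕ, ℤ) ∈ idealParams p l ↔
      (b₂ ≤ b₁ ∧ b₁ + b₂ + b₃ = l) ∧ 0 ≤ c ∧ c < (p : ℤ) ^ b₂ := by
  rw [idealParams, Finset.mem_sigma, Finset.mem_Ico, mem_indexTriples]

theorem card_idealParams (p l : ℕ) :
    (idealParams p l).card = ∑ b ∈ indexTriples l, p ^ b.2.1 := by
  simp only [idealParams, Finset.card_sigma, Int.card_Ico, sub_zero, ← Nat.cast_pow,
    Int.toNat_natCast]

noncomputable def idealOfParams (lam : ℤ) (p : ℕ) (q : Σ _ : ℕ × ℕ × ℕ, ℤ) : Ideal ℤ[X] :=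
  hermiteIdeal (p ^ q.1.1) (p ^ q.1.2.1) q.2 ⊓
    (Ideal.span {((p ^ q.1.2.2 : ℕ) : ℤ)}).comap (evalRingHom lam)

section idealOfParams

variable {lam : ℤ} {p l : ℕ}

theorem natCast_pow_mem_hermiteIdeal (hp : 0 < p) {b₁ b₂ : ℕ} (hb : b₂ ≤ b₁)
    (hl : b₁ + b₂ ≤ l) (c : ℤ) : ((p ^ l : ℕ) : ℤ[X]) ∈ hermiteIdeal (p ^ b₁) (p ^ b₂) c := by
  apply Ideal.natCast_mem_of_natCard_quotient_dvd
  rw [natCard_quotient_hermiteIdeal (pow_pos hp b₁) (pow_dvd_pow p hb), ← pow_add]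
  exact pow_dvd_pow p hl

theorem natCast_pow_mem_comap_evalRingHom {b : ℕ} (hl : b ≤ l) :
    ((p ^ l : ℕ) : ℤ[X]) ∈ (Ideal.span {((p ^ b : ℕ) : ℤ)}).comap (evalRingHom lam) := by
  apply Ideal.natCast_mem_of_natCard_quotient_dvd
  rw [natCard_quotient_comap_evalRingHom]
  exact pow_dvd_pow p hl

theorem mapsTo_idealOfParams (hp : 0 < p) (hcop : IsCoprime (p : ℤ) lam) :
    Set.MapsTo (idealOfParams lam p) (idealParams p l)
      {I | X ^ 2 * (X - C lam) ∈ I ∧ Nat.card (ℤ[X] ⧸ I) = p ^ l} := by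
  rintro ⟨⟨b₁, b₂, b₃⟩, c⟩ hq
  obtain ⟨⟨hb, hl⟩, -⟩ := mk_mem_idealParams.1 hq
  have hsup : hermiteIdeal (p ^ b₁) (p ^ b₂) c ⊔
      (Ideal.span {((p ^ b₃ : ℕ) : ℤ)}).comap (evalRingHom lam) = ⊤ :=
    Ideal.sup_eq_top_of_span_eq_top (span_X_sq_X_sub_C_natCast_pow_eq_top hcop l)
    (Ideal.mem_sup_left X_sq_mem_hermiteIdeal)
    (Ideal.mem_sup_right (X_sub_C_mem_comap_evalRingHom lam _))
    (Ideal.mem_sup_left (natCast_pow_mem_hermiteIdeal hp hb (by omega) c))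
  refine ⟨Ideal.mem_inf.2 ⟨Ideal.mul_mem_right _ _ X_sq_mem_hermiteIdeal,
    Ideal.mul_mem_left _ _ (X_sub_C_mem_comap_evalRingHom lam _)⟩, ?_⟩
  rw [idealOfParams, Ideal.natCard_quotient_inf hsup,
    natCard_quotient_hermiteIdeal (pow_pos hp b₁) (pow_dvd_pow p hb),
    natCard_quotient_comap_evalRingHom, ← pow_add, ← pow_add, hl]

theorem idealOfParams_sup_span_eq (hp : 0 < p) (hcop : IsCoprime (p : ℤ) lam) {b₁ b₂ b₃ : ℕ}
    {c : ℤ} (hq : ⟨(b₁, b₂, b₃), c⟩ ∈ idealParams p l) :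
    idealOfParams lam p ⟨(b₁, b₂, b₃), c⟩ ⊔ Ideal.span {X ^ 2}
        = hermiteIdeal (p ^ b₁) (p ^ b₂) c ∧
      idealOfParams lam p ⟨(b₁, b₂, b₃), c⟩ ⊔ Ideal.span {X - C lam}
        = (Ideal.span {((p ^ b₃ : ℕ) : ℤ)}).comap (evalRingHom lam) := by
  obtain ⟨⟨hb, hl⟩, -⟩ := mk_mem_idealParams.1 hq
  have hgen := span_X_sq_X_sub_C_natCast_pow_eq_top hcop l
  have hgen' : Ideal.span {X - C lam, X ^ 2, ((p ^ l : ℕ) : ℤ[X])} = ⊤ := by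
    rwa [Set.insert_comm]
  refine ⟨Ideal.inf_sup_span_singleton_eq_s12 hgen X_sq_mem_hermiteIdeal
    (X_sub_C_mem_comap_evalRingHom lam _)
    (natCast_pow_mem_comap_evalRingHom (b := b₃) (by omega)), ?_⟩
  rw [idealOfParams, inf_comm]
  exact Ideal.inf_sup_span_singleton_eq_s12 hgen' (X_sub_C_mem_comap_evalRingHom lam _)
    X_sq_mem_hermiteIdeal (natCast_pow_mem_hermiteIdeal hp hb (by omega) c)

theorem injOn_idealOfParams (hp : 1 < p) (hcop : IsCoprime (p : ℤ) lam) :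
    Set.InjOn (idealOfParams lam p) (idealParams p l) := by
  rintro ⟨⟨b₁, b₂, b₃⟩, c⟩ hq ⟨⟨b₁', b₂', b₃'⟩, c'⟩ hq' heq
  obtain ⟨h₁, h₂⟩ := idealOfParams_sup_span_eq (zero_lt_one.trans hp) hcop hq
  obtain ⟨h₁', h₂'⟩ := idealOfParams_sup_span_eq (zero_lt_one.trans hp) hcop hq'
  rw [heq, h₁'] at h₁
  rw [heq, h₂'] at h₂
  obtain ⟨⟨hb, -⟩, hc⟩ := mk_mem_idealParams.1 hq
  obtain ⟨⟨hb', -⟩, hc'⟩ := mk_mem_idealParams.1 hq'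
  obtain ⟨e₁, e₂, rfl⟩ := hermiteIdeal_inj (pow_pos (zero_lt_one.trans hp) b₁')
    (pow_dvd_pow p hb') (pow_pos (zero_lt_one.trans hp) b₁) (pow_dvd_pow p hb)
    (by exact_mod_cast hc') (by exact_mod_cast hc) h₁
  have e₃ := congrArg (fun J => Nat.card (ℤ[X] ⧸ J)) h₂
  simp only [natCard_quotient_comap_evalRingHom] at e₃
  obtain rfl := Nat.pow_right_injective hp e₁
  obtain rfl := Nat.pow_right_injective hp e₂
  obtain rfl := Nat.pow_right_injective hp e₃
  rfl

theorem surjOn_idealOfParams (hp : p.Prime) (hcop : IsCoprime (p : ℤ) lam) :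
    Set.SurjOn (idealOfParams lam p) (idealParams p l)
      {I | X ^ 2 * (X - C lam) ∈ I ∧ Nat.card (ℤ[X] ⧸ I) = p ^ l} := by
  rintro I ⟨hf, hcard⟩
  have hgen := span_X_sq_X_sub_C_natCast_pow_eq_top hcop l
  have hpl : ((p ^ l : ℕ) : ℤ[X]) ∈ I :=
    Ideal.natCast_mem_of_natCard_quotient_dvd (hcard ▸ dvd_rfl)
  have hX : X ^ 2 ∈ I ⊔ Ideal.span {X ^ 2} :=
    Ideal.mem_sup_right (Ideal.mem_span_singleton_self _)
  have hXl : X - C lam ∈ I ⊔ Ideal.span {X - C lam} :=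
    Ideal.mem_sup_right (Ideal.mem_span_singleton_self _)
  have hinf := Ideal.sup_span_singleton_inf_sup_span_singleton hgen hf hpl
  have hsup := Ideal.sup_eq_top_of_span_eq_top hgen (Ideal.mem_sup_left hX)
    (Ideal.mem_sup_right hXl) (Ideal.mem_sup_left (Ideal.mem_sup_left hpl))
  have hprod : Nat.card (ℤ[X] ⧸ I ⊔ Ideal.span {X ^ 2})
      * Nat.card (ℤ[X] ⧸ I ⊔ Ideal.span {X - C lam}) = p ^ l := by
    rw [← Ideal.natCard_quotient_inf hsup, hinf, hcard]
  obtain ⟨m, hml, hm⟩ := (Nat.dvd_prime_pow hp).1 (Dvd.intro _ hprod)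
  obtain ⟨a, d, c, ha, hda, hc, hcd, hJ₁⟩ :=
    exists_eq_hermiteIdeal hX (by rw [hm]; exact pow_ne_zero m hp.ne_zero)
  have had : a * d = p ^ m := by rw [← natCard_quotient_hermiteIdeal ha hda c, ← hJ₁, hm]
  obtain ⟨b₁, -, rfl⟩ := (Nat.dvd_prime_pow hp).1 (Dvd.intro _ had)
  obtain ⟨b₂, -, rfl⟩ := (Nat.dvd_prime_pow hp).1 (Dvd.intro_left _ had)
  have hb : b₂ ≤ b₁ := (Nat.pow_dvd_pow_iff_le_right hp.one_lt).1 hda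
  have hm' : b₁ + b₂ = m := Nat.pow_right_injective hp.two_le (by simp only [pow_add, had])
  have hcard₂ : Nat.card (ℤ[X] ⧸ I ⊔ Ideal.span {X - C lam}) = p ^ (l - m) := by
    refine Nat.eq_of_mul_eq_mul_left (pow_pos hp.pos m) ?_
    rw [← pow_add, Nat.add_sub_cancel' hml, ← hprod, hm]
  have hJ₂ := eq_comap_evalRingHom_of_X_sub_C_mem hXl
  rw [hcard₂] at hJ₂
  refine ⟨⟨(b₁, b₂, l - m), c⟩,
    mk_mem_idealParams.2 ⟨⟨hb, by omega⟩, hc, by exact_mod_cast hcd⟩, ?_⟩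
  dsimp only [idealOfParams]
  rw [← hJ₁, ← hJ₂, hinf]

end idealOfParams

theorem ideal_count_prime_power_lambda_general (lam : ℤ)
    (p : ℕ) (hp : p.Prime) (hpl : ¬ (p : ℤ) ∣ lam) (l : ℕ) :
    idealCount
        (Polynomial ℤ ⧸ Ideal.span
          {(Polynomial.X : Polynomial ℤ) ^ 2 * (Polynomial.X - Polynomial.C lam)})
        (p ^ l) =
      ∑ b ∈ (Finset.range (l + 1) ×ˢ Finset.range (l + 1) ×ˢ Finset.range (l + 1)).filter
          (fun b => b.2.1 ≤ b.1 ∧ b.1 + b.2.1 + b.2.2 = l),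
        p ^ (b.1 - b.2.1 - (b.1 - b.2.1 + 1) / 2) := by
  have hcop : IsCoprime (p : ℤ) lam := (Nat.prime_iff_prime_int.1 hp).coprime_iff_not_dvd.2 hpl
  have hbij : Set.BijOn (idealOfParams lam p) (idealParams p l)
      {I | X ^ 2 * (X - C lam) ∈ I ∧ Nat.card (ℤ[X] ⧸ I) = p ^ l} :=
    ⟨mapsTo_idealOfParams hp.pos hcop, injOn_idealOfParams hp.one_lt hcop,
      surjOn_idealOfParams hp hcop⟩
  simp_rw [idealCount_quotient, Ideal.span_singleton_le_iff_mem]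
  rw [← hbij.image_eq, hbij.injOn.ncard_image, Set.ncard_coe_finset, card_idealParams]
  exact sum_indexTriples_pow_eq p l

/-- For `f = X²(X - λ)` and a prime `p ∤ λ`, the number of ideals of `ℤ[X]/(f)` of index
`p^l` equals the sum, over all triples `(b₁, b₂, b₃)` of non-negative integers with
`b₂ ≤ b₁` and `b₁ + b₂ + b₃ = l`, of `p^{b₁ - b₂ - ⌈(b₁ - b₂)/2⌉}` (noting that
`⌈k/2⌉ = (k + 1)/2` in natural-number division). -/
theorem ideal_count_prime_power_lambda (lam : ℤ) (hlam : lam ≠ 0)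
    (p : ℕ) (hp : p.Prime) (hpl : ¬ (p : ℤ) ∣ lam) (l : ℕ) :
    idealCount
        (Polynomial ℤ ⧸ Ideal.span
          {(Polynomial.X : Polynomial ℤ) ^ 2 * (Polynomial.X - Polynomial.C lam)})
        (p ^ l) =
      ∑ b ∈ (Finset.range (l + 1) ×ˢ Finset.range (l + 1) ×ˢ Finset.range (l + 1)).filter
          (fun b => b.2.1 ≤ b.1 ∧ b.1 + b.2.1 + b.2.2 = l),
        p ^ (b.1 - b.2.1 - (b.1 - b.2.1 + 1) / 2) :=
  ideal_count_prime_power_lambda_general lam p hp hpl l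
end

section
/- Let λ be a nonzero integer, let f(X) = X²(X−λ), let R = ℤ[X]/(f), and let p be a prime dividing λ. Then for every real number σ > 1/2, the series Σ_{l≥0} a_R(p^l) p^{−lσ} converges. -/
lemma Int.eq_of_dvd_sub_of_mem_Ico {m x y : ℤ} (hx : x ∈ Set.Ico 0 m) (hy : y ∈ Set.Ico 0 m)
    (h : m ∣ x - y) : x = y :=
  Int.ext_ediv_modEq (by rw [Int.ediv_eq_zero_of_lt hx.1 hx.2, Int.ediv_eq_zero_of_lt hy.1 hy.2])
    (Int.modEq_iff_dvd.2 (dvd_sub_comm.1 h))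

lemma Int.le_of_natCast_pow_dvd_pow {p : ℕ} (hp : 1 < p) {a b : ℕ}
    (h : (p : ℤ) ^ a ∣ (p : ℤ) ^ b) : a ≤ b :=
  (Nat.pow_dvd_pow_iff_le_right hp).1 (by exact_mod_cast h)

lemma Int.ediv_pow_sub_lt_pow {p : ℕ} (hp : 0 < p) {n e : ℕ} {z : ℤ} (hz : z < (p : ℤ) ^ n) :
    z / (p : ℤ) ^ (n - e) < (p : ℤ) ^ e := by
  rw [Int.ediv_lt_iff_lt_mul (pow_pos (by exact_mod_cast hp) _), ← pow_add]
  exact hz.trans_le (pow_le_pow_right₀ (by exact_mod_cast hp) (by omega))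

lemma Int.pow_sub_padicValInt_dvd_of_dvd_mul {p : ℕ} [Fact p.Prime] {n : ℕ} {a z : ℤ}
    (ha : a ≠ 0) (h : (p : ℤ) ^ n ∣ a * z) : (p : ℤ) ^ (n - padicValInt p a) ∣ z := by
  rcases eq_or_ne z 0 with rfl | hz
  · exact dvd_zero _
  rw [padicValInt_dvd_iff, padicValInt.mul ha hz] at h
  rw [padicValInt_dvd_iff]
  right
  have := h.resolve_left (mul_ne_zero ha hz)
  omega

lemma Int.exists_eq_span_pow_of_pow_mem {p : ℕ} (hp : p.Prime) {S : Ideal ℤ} {l : ℕ}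
    (h : (p : ℤ) ^ l ∈ S) : ∃ a, S = Ideal.span {(p : ℤ) ^ a} := by
  rw [← Ideal.span_singleton_generator S, Ideal.mem_span_singleton] at h
  obtain ⟨a, -, ha⟩ := (dvd_prime_pow (Nat.prime_iff_prime_int.mp hp) l).1 h
  rw [← Ideal.span_singleton_generator S]
  exact ⟨a, Ideal.span_singleton_eq_span_singleton.2 ha⟩

lemma Ideal.natCard_quotient_zsmul_mem {A : Type*} [Ring A] (I : Ideal A) [I.IsTwoSided]
    (r : A) : (Nat.card (A ⧸ I) : ℤ) • r ∈ I := by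
  rw [natCast_zsmul, ← Ideal.Quotient.eq_zero_iff_mem, map_nsmul]
  exact card_nsmul_eq_zero'

lemma Set.ncard_le_card_of_forall_subsingleton {ι κ : Type*} {s : Set ι} {t : Finset κ}
    (r : ι → κ → Prop) (hs : ∀ a ∈ s, ∃ b ∈ t, r a b)
    (ht : ∀ b ∈ t, {a | a ∈ s ∧ r a b}.Subsingleton) : s.ncard ≤ t.card := by
  classical
  rcases s.finite_or_infinite with hfin | hinf
  · rw [Set.ncard_eq_toFinset_card s hfin]
    exact Finset.card_le_card_of_forall_subsingleton r (by simpa using hs) (by simpa using ht)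
  · simp [hinf.ncard]

lemma summable_mul_rpow_of_le_pow_half {x : ℝ} (hx : 1 < x) {a : ℕ → ℝ} {C : ℝ}
    (ha₀ : ∀ l, 0 ≤ a l) (ha : ∀ l, a l ≤ C * ((l : ℝ) + 1) ^ 3 * x ^ (l / 2)) {σ : ℝ}
    (hσ : 1 / 2 < σ) : Summable fun l : ℕ => a l * x ^ (-(l : ℝ) * σ) := by
  set r := x ^ (1 / 2 - σ)
  have hr : ‖r‖ < 1 := by
    rw [Real.norm_of_nonneg (by positivity)]
    exact Real.rpow_lt_one_of_one_lt_of_neg hx (by linarith)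
  have hgeom : Summable fun l : ℕ => ((l : ℝ) + 1) ^ 3 * r ^ l := by
    have h k := summable_pow_mul_geometric_of_norm_lt_one k hr
    exact ((((h 3).add ((h 2).mul_left 3)).add ((h 1).mul_left 3)).add (h 0)).congr
      fun l => by ring
  have hC : 0 ≤ C := by simpa using (ha₀ 0).trans (ha 0)
  have hx_half (l : ℕ) : x ^ (l / 2) * x ^ (-(l : ℝ) * σ) ≤ r ^ l := by
    calc x ^ (l / 2) * x ^ (-(l : ℝ) * σ)
        ≤ x ^ ((l : ℝ) / 2) * x ^ (-(l : ℝ) * σ) := by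
          gcongr
          rw [← Real.rpow_natCast]
          exact Real.rpow_le_rpow_of_exponent_le hx.le Nat.cast_div_le
      _ = r ^ l := by
          rw [← Real.rpow_add (by linarith), ← Real.rpow_mul_natCast (by linarith)]
          ring_nf
  refine (hgeom.mul_left C).of_nonneg_of_le (fun l => mul_nonneg (ha₀ l) (by positivity))
    fun l => ?_
  calc a l * x ^ (-(l : ℝ) * σ)
      ≤ C * ((l : ℝ) + 1) ^ 3 * x ^ (l / 2) * x ^ (-(l : ℝ) * σ) := by gcongr; exact ha l
    _ = C * ((l : ℝ) + 1) ^ 3 * (x ^ (l / 2) * x ^ (-(l : ℝ) * σ)) := by ring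
    _ ≤ C * ((l : ℝ) + 1) ^ 3 * r ^ l := by gcongr; exact hx_half l
    _ = C * (((l : ℝ) + 1) ^ 3 * r ^ l) := by ring

namespace XSqMulXSubC

open Polynomial

variable (lam : ℤ)

abbrev R : Type := ℤ[X] ⧸ Ideal.span {(X ^ 2 * (X - C lam) : ℤ[X])}

/-- The element `a + b x + c x²` of `R lam`, where `x` is the class of `X`. -/
noncomputable def ofCoeffs (a b c : ℤ) : R lam :=
  Ideal.Quotient.mk _ (C a + C b * X + C c * X ^ 2)

variable {lam}

@[simp]
lemma ofCoeffs_zero : ofCoeffs lam 0 0 0 = 0 := by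
  simp [ofCoeffs]

lemma ofCoeffs_add (a b c a' b' c' : ℤ) :
    ofCoeffs lam a b c + ofCoeffs lam a' b' c' = ofCoeffs lam (a + a') (b + b') (c + c') := by
  rw [ofCoeffs, ofCoeffs, ofCoeffs, ← map_add]
  congr 1
  simp only [C_add]
  ring

lemma ofCoeffs_sub (a b c a' b' c' : ℤ) :
    ofCoeffs lam a b c - ofCoeffs lam a' b' c' = ofCoeffs lam (a - a') (b - b') (c - c') := by
  rw [ofCoeffs, ofCoeffs, ofCoeffs, ← map_sub]
  congr 1
  simp only [C_sub]
  ring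

lemma zsmul_ofCoeffs (s a b c : ℤ) :
    s • ofCoeffs lam a b c = ofCoeffs lam (s * a) (s * b) (s * c) := by
  rw [ofCoeffs, ofCoeffs, ← map_zsmul, smul_eq_C_mul]
  congr 1
  simp only [C_mul]
  ring

lemma mk_X_mul_ofCoeffs (a b c : ℤ) :
    Ideal.Quotient.mk _ X * ofCoeffs lam a b c = ofCoeffs lam 0 a (b + lam * c) := by
  rw [ofCoeffs, ofCoeffs, ← map_mul, Ideal.Quotient.mk_eq_mk_iff_sub_mem,
    Ideal.mem_span_singleton]
  exact ⟨C c, by simp only [C_add, C_mul, C_0]; ring⟩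

lemma exists_ofCoeffs (r : R lam) : ∃ a b c, r = ofCoeffs lam a b c := by
  obtain ⟨q, rfl⟩ := Ideal.Quotient.mk_surjective r
  induction q using Polynomial.induction_on with
  | C a => exact ⟨a, 0, 0, by simp [ofCoeffs]⟩
  | add q q' hq hq' =>
    obtain ⟨a, b, c, hq⟩ := hq
    obtain ⟨a', b', c', hq'⟩ := hq'
    exact ⟨_, _, _, by rw [map_add, hq, hq', ofCoeffs_add]⟩
  | monomial n s hq =>
    obtain ⟨a, b, c, hq⟩ := hq
    refine ⟨0, a, b + lam * c, ?_⟩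
    rw [← mk_X_mul_ofCoeffs, ← hq, ← map_mul]
    ring_nf

def coeffIdeal0 (I : Ideal (R lam)) : Ideal ℤ where
  carrier := {a | ∃ b c, ofCoeffs lam a b c ∈ I}
  zero_mem' := ⟨0, 0, by simp⟩
  add_mem' := by
    rintro a a' ⟨b, c, h⟩ ⟨b', c', h'⟩
    exact ⟨b + b', c + c', by simpa only [ofCoeffs_add] using I.add_mem h h'⟩
  smul_mem' := by
    rintro s a ⟨b, c, h⟩
    exact ⟨s * b, s * c, by simpa only [zsmul_ofCoeffs, smul_eq_mul] using zsmul_mem h s⟩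

def coeffIdeal1 (I : Ideal (R lam)) : Ideal ℤ where
  carrier := {b | ∃ c, ofCoeffs lam 0 b c ∈ I}
  zero_mem' := ⟨0, by simp⟩
  add_mem' := by
    rintro b b' ⟨c, h⟩ ⟨c', h'⟩
    exact ⟨c + c', by simpa only [ofCoeffs_add, add_zero] using I.add_mem h h'⟩
  smul_mem' := by
    rintro s b ⟨c, h⟩
    exact ⟨s * c, by simpa only [zsmul_ofCoeffs, smul_eq_mul, mul_zero] using zsmul_mem h s⟩

def coeffIdeal2 (I : Ideal (R lam)) : Ideal ℤ where
  carrier := {c | ofCoeffs lam 0 0 c ∈ I}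
  zero_mem' := by simp
  add_mem' {c c'} (h h' : ofCoeffs lam 0 0 _ ∈ I) := by
    simpa only [Set.mem_ofPred_eq, ofCoeffs_add, add_zero] using I.add_mem h h'
  smul_mem' s c (h : ofCoeffs lam 0 0 c ∈ I) := by
    simpa only [Set.mem_ofPred_eq, zsmul_ofCoeffs, smul_eq_mul, mul_zero] using zsmul_mem h s

variable {I : Ideal (R lam)}

lemma mem_coeffIdeal2 {c : ℤ} : c ∈ coeffIdeal2 I ↔ ofCoeffs lam 0 0 c ∈ I := Iff.rfl

lemma ofCoeffs_pow_mul_mem {p l : ℕ} (hcard : Nat.card (R lam ⧸ I) = p ^ l) (a b c : ℤ) :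
    ofCoeffs lam ((p : ℤ) ^ l * a) ((p : ℤ) ^ l * b) ((p : ℤ) ^ l * c) ∈ I := by
  simpa only [hcard, Nat.cast_pow, zsmul_ofCoeffs] using
    Ideal.natCard_quotient_zsmul_mem I (ofCoeffs lam a b c)

/-- The Hermite normal form of `I` with respect to the `ℤ`-basis `1, x, x²`; by
`IsHermiteForm.mem_iff`, `I` is spanned over `ℤ` by `p^a₀ + α x + β x²`, `p^a₁ x + γ x²` and
`p^a₂ x²`. -/
structure IsHermiteForm (p : ℕ) (I : Ideal (R lam)) (a₀ a₁ a₂ : ℕ) (α β γ : ℤ) : Prop where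
  coeffIdeal0_eq : coeffIdeal0 I = Ideal.span {(p : ℤ) ^ a₀}
  coeffIdeal1_eq : coeffIdeal1 I = Ideal.span {(p : ℤ) ^ a₁}
  coeffIdeal2_eq : coeffIdeal2 I = Ideal.span {(p : ℤ) ^ a₂}
  α_mem : α ∈ Set.Ico 0 ((p : ℤ) ^ a₁)
  β_mem : β ∈ Set.Ico 0 ((p : ℤ) ^ a₂)
  γ_mem : γ ∈ Set.Ico 0 ((p : ℤ) ^ a₂)
  mem₀ : ofCoeffs lam ((p : ℤ) ^ a₀) α β ∈ I
  mem₁ : ofCoeffs lam 0 ((p : ℤ) ^ a₁) γ ∈ I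

variable {p : ℕ}

lemma ofCoeffs_emod_mem {a b c m : ℤ} (hm : ofCoeffs lam 0 0 m ∈ I)
    (h : ofCoeffs lam a b c ∈ I) : ofCoeffs lam a b (c % m) ∈ I := by
  have := I.sub_mem h (zsmul_mem hm (c / m))
  rwa [zsmul_ofCoeffs, ofCoeffs_sub, mul_zero, sub_zero, sub_zero, mul_comm (c / m) m,
    ← Int.emod_def] at this

lemma ofCoeffs_emod_lin_mem {a b c m c' : ℤ} (hm : ofCoeffs lam 0 m c' ∈ I)
    (h : ofCoeffs lam a b c ∈ I) : ofCoeffs lam a (b % m) (c - b / m * c') ∈ I := by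
  have := I.sub_mem h (zsmul_mem hm (b / m))
  rwa [zsmul_ofCoeffs, ofCoeffs_sub, mul_zero, sub_zero, mul_comm (b / m) m, ← Int.emod_def]
    at this

theorem exists_isHermiteForm (hp : p.Prime) {l : ℕ} (hcard : Nat.card (R lam ⧸ I) = p ^ l) :
    ∃ a₀ a₁ a₂ α β γ, IsHermiteForm p I a₀ a₁ a₂ α β γ := by
  obtain ⟨a₀, h₀⟩ := Int.exists_eq_span_pow_of_pow_mem hp (S := coeffIdeal0 I)
    ⟨0, 0, by simpa using ofCoeffs_pow_mul_mem hcard 1 0 0⟩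
  obtain ⟨a₁, h₁⟩ := Int.exists_eq_span_pow_of_pow_mem hp (S := coeffIdeal1 I)
    ⟨0, by simpa using ofCoeffs_pow_mul_mem hcard 0 1 0⟩
  obtain ⟨a₂, h₂⟩ := Int.exists_eq_span_pow_of_pow_mem hp (S := coeffIdeal2 I)
    (by simpa [mem_coeffIdeal2] using ofCoeffs_pow_mul_mem hcard 0 0 1)
  have hx₂ : ofCoeffs lam 0 0 ((p : ℤ) ^ a₂) ∈ I :=
    (h₂.ge (Ideal.mem_span_singleton_self _) : _)
  obtain ⟨c₁, hx₁⟩ : (p : ℤ) ^ a₁ ∈ coeffIdeal1 I := h₁.ge (Ideal.mem_span_singleton_self _)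
  obtain ⟨b₀, c₀, hx₀⟩ : (p : ℤ) ^ a₀ ∈ coeffIdeal0 I := h₀.ge (Ideal.mem_span_singleton_self _)
  have hx₁' := ofCoeffs_emod_mem hx₂ hx₁
  have hpos (a : ℕ) : (0 : ℤ) < (p : ℤ) ^ a := pow_pos (by exact_mod_cast hp.pos) a
  have hIco {m : ℤ} (z : ℤ) (hm : 0 < m) : z % m ∈ Set.Ico 0 m :=
    ⟨Int.emod_nonneg z hm.ne', Int.emod_lt_of_pos z hm⟩
  exact ⟨a₀, a₁, a₂, _, _, _, h₀, h₁, h₂, hIco _ (hpos a₁), hIco _ (hpos a₂), hIco _ (hpos a₂),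
    ofCoeffs_emod_mem hx₂ (ofCoeffs_emod_lin_mem hx₁' hx₀), hx₁'⟩

/-- For fixed `a₀, a₁, a₂, α`, the congruences `IsHermiteForm.dvd_pow_add_lam_mul_γ` and
`IsHermiteForm.dvd_α_add_lam_mul_β` determine `γ` and then `β` modulo `p ^ (a₂ - e)`, where
`e = v_p(λ)`, so only their quotients by `p ^ (a₂ - e)` need to be recorded. -/
def hermiteCode (p e a₀ a₁ a₂ : ℕ) (α β γ : ℤ) : (ℕ × ℕ × ℕ) × ℤ × ℤ × ℤ :=
  ((a₀, a₁, a₂), α, β / (p : ℤ) ^ (a₂ - e), γ / (p : ℤ) ^ (a₂ - e))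

noncomputable def codeBox (p e l : ℕ) : Finset ((ℕ × ℕ × ℕ) × ℤ × ℤ × ℤ) :=
  (Finset.range (l + 1) ×ˢ Finset.range (l + 1) ×ˢ Finset.range (l + 1)) ×ˢ
    (Finset.Ico 0 ((p : ℤ) ^ (l / 2)) ×ˢ Finset.Ico 0 ((p : ℤ) ^ e) ×ˢ Finset.Ico 0 ((p : ℤ) ^ e))

lemma card_codeBox (p e l : ℕ) :
    (codeBox p e l).card = (l + 1) ^ 3 * (p ^ (l / 2) * (p ^ e * p ^ e)) := by
  simp only [codeBox, Finset.card_product, Finset.card_range, Int.card_Ico, sub_zero,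
    ← Nat.cast_pow, Int.toNat_natCast]
  ring

namespace IsHermiteForm

variable {a₀ a₁ a₂ : ℕ} {α β γ : ℤ} (h : IsHermiteForm p I a₀ a₁ a₂ α β γ)
include h

lemma dvd_of_mem₀ {a b c : ℤ} (hv : ofCoeffs lam a b c ∈ I) : (p : ℤ) ^ a₀ ∣ a :=
  Ideal.mem_span_singleton.1 (h.coeffIdeal0_eq ▸ ⟨b, c, hv⟩)

lemma dvd_of_mem₁ {b c : ℤ} (hv : ofCoeffs lam 0 b c ∈ I) : (p : ℤ) ^ a₁ ∣ b :=
  Ideal.mem_span_singleton.1 (h.coeffIdeal1_eq ▸ ⟨c, hv⟩)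

lemma mem₂_iff {c : ℤ} : ofCoeffs lam 0 0 c ∈ I ↔ (p : ℤ) ^ a₂ ∣ c := by
  rw [← mem_coeffIdeal2, h.coeffIdeal2_eq, Ideal.mem_span_singleton]

lemma mem_iff {v : R lam} :
    v ∈ I ↔ ∃ s t u : ℤ, v = s • ofCoeffs lam ((p : ℤ) ^ a₀) α β +
      t • ofCoeffs lam 0 ((p : ℤ) ^ a₁) γ + u • ofCoeffs lam 0 0 ((p : ℤ) ^ a₂) := by
  refine ⟨fun hv => ?_, ?_⟩
  · obtain ⟨a, b, c, rfl⟩ := exists_ofCoeffs v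
    obtain ⟨s, hs⟩ := h.dvd_of_mem₀ hv
    have hv₁ : ofCoeffs lam 0 (b - s * α) (c - s * β) ∈ I := by
      have := I.sub_mem hv (zsmul_mem h.mem₀ s)
      rwa [zsmul_ofCoeffs, ofCoeffs_sub, hs, mul_comm s, sub_self] at this
    obtain ⟨t, ht⟩ := h.dvd_of_mem₁ hv₁
    have hv₂ : ofCoeffs lam 0 0 (c - s * β - t * γ) ∈ I := by
      have := I.sub_mem hv₁ (zsmul_mem h.mem₁ t)
      rwa [zsmul_ofCoeffs, ofCoeffs_sub, ht, mul_comm t ((p : ℤ) ^ a₁), sub_self, mul_zero,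
        sub_zero] at this
    obtain ⟨u, hu⟩ := h.mem₂_iff.1 hv₂
    refine ⟨s, t, u, ?_⟩
    simp only [zsmul_ofCoeffs, ofCoeffs_add]
    congr 1
    · linear_combination hs
    · linear_combination ht
    · linear_combination hu
  · rintro ⟨s, t, u, rfl⟩
    exact I.add_mem (I.add_mem (zsmul_mem h.mem₀ s) (zsmul_mem h.mem₁ t))
      (zsmul_mem (h.mem₂_iff.2 dvd_rfl) u)

lemma ideal_eq {I' : Ideal (R lam)} (h' : IsHermiteForm p I' a₀ a₁ a₂ α β γ) : I = I' :=
  Ideal.ext fun _ => by rw [h.mem_iff, h'.mem_iff]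

lemma mem_X_mul_mem₀ : ofCoeffs lam 0 ((p : ℤ) ^ a₀) (α + lam * β) ∈ I := by
  simpa only [mk_X_mul_ofCoeffs] using I.mul_mem_left (Ideal.Quotient.mk _ X) h.mem₀

lemma a₁_le_a₀ (hp : 1 < p) : a₁ ≤ a₀ :=
  Int.le_of_natCast_pow_dvd_pow hp (h.dvd_of_mem₁ h.mem_X_mul_mem₀)

lemma dvd_pow_add_lam_mul_γ : (p : ℤ) ^ a₂ ∣ (p : ℤ) ^ a₁ + lam * γ := by
  rw [← h.mem₂_iff, ← mk_X_mul_ofCoeffs]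
  exact I.mul_mem_left _ h.mem₁

lemma dvd_α_add_lam_mul_β (hp : 1 < p) :
    (p : ℤ) ^ a₂ ∣ α + lam * β - (p : ℤ) ^ (a₀ - a₁) * γ := by
  rw [← h.mem₂_iff]
  have := I.sub_mem h.mem_X_mul_mem₀ (zsmul_mem h.mem₁ ((p : ℤ) ^ (a₀ - a₁)))
  rwa [zsmul_ofCoeffs, ofCoeffs_sub, mul_zero, sub_zero, ← pow_add,
    Nat.sub_add_cancel (h.a₁_le_a₀ hp), sub_self] at this

lemma a₂_le (hp : 1 < p) {l : ℕ} (hcard : Nat.card (R lam ⧸ I) = p ^ l) : a₂ ≤ l := by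
  refine Int.le_of_natCast_pow_dvd_pow hp (h.mem₂_iff.1 ?_)
  simpa using ofCoeffs_pow_mul_mem hcard 0 0 1

lemma a₀_add_a₁_le (hp : 1 < p) {l : ℕ} (hcard : Nat.card (R lam ⧸ I) = p ^ l) :
    a₀ + a₁ ≤ l := by
  have : Finite (R lam ⧸ I) := Nat.finite_of_card_ne_zero (hcard ▸ (pow_pos (by omega) l).ne')
  have := Fintype.ofFinite (R lam ⧸ I)
  let box : Finset (ℤ × ℤ) := Finset.Ico 0 ((p : ℤ) ^ a₀) ×ˢ Finset.Ico 0 ((p : ℤ) ^ a₁)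
  have hinj : Set.InjOn (fun x : ℤ × ℤ => Ideal.Quotient.mk I (ofCoeffs lam x.1 x.2 0)) box := by
    rintro ⟨a, b⟩ hab ⟨a', b'⟩ hab' heq
    simp only [box, Finset.coe_product, Finset.coe_Ico, Set.mem_prod] at hab hab'
    rw [Ideal.Quotient.eq, ofCoeffs_sub] at heq
    obtain rfl := Int.eq_of_dvd_sub_of_mem_Ico hab.1 hab'.1 (h.dvd_of_mem₀ heq)
    rw [sub_self] at heq
    obtain rfl := Int.eq_of_dvd_sub_of_mem_Ico hab.2 hab'.2 (h.dvd_of_mem₁ heq)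
    rfl
  have hcard_le := Finset.card_le_card_of_injOn _ (fun _ _ => Finset.mem_univ _) hinj
  rw [Finset.card_univ, ← Nat.card_eq_fintype_card, hcard] at hcard_le
  simp only [box, Finset.card_product, Int.card_Ico, sub_zero, ← Nat.cast_pow, Int.toNat_natCast,
    ← pow_add] at hcard_le
  exact (Nat.pow_le_pow_iff_right hp).1 hcard_le

lemma hermiteCode_mem_codeBox (hp : 1 < p) (e : ℕ) {l : ℕ}
    (hcard : Nat.card (R lam ⧸ I) = p ^ l) :
    hermiteCode p e a₀ a₁ a₂ α β γ ∈ codeBox p e l := by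
  have h₀₁ := h.a₀_add_a₁_le hp hcard
  have h₁₀ := h.a₁_le_a₀ hp
  have h₂ := h.a₂_le hp hcard
  have hpos (a : ℕ) : (0 : ℤ) < (p : ℤ) ^ a := pow_pos (by exact_mod_cast hp.trans' one_pos) a
  simp only [hermiteCode, codeBox, Finset.mem_product, Finset.mem_range, Finset.mem_Ico]
  refine ⟨⟨by omega, by omega, by omega⟩, ⟨h.α_mem.1, h.α_mem.2.trans_le ?_⟩,
    ⟨Int.ediv_nonneg h.β_mem.1 (hpos _).le, Int.ediv_pow_sub_lt_pow (by omega) h.β_mem.2⟩,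
    ⟨Int.ediv_nonneg h.γ_mem.1 (hpos _).le, Int.ediv_pow_sub_lt_pow (by omega) h.γ_mem.2⟩⟩
  exact pow_le_pow_right₀ (by exact_mod_cast hp.le) (by omega)

lemma eq_of_hermiteCode_eq [Fact p.Prime] (hlam : lam ≠ 0) {I' : Ideal (R lam)} {β' γ' : ℤ}
    (h' : IsHermiteForm p I' a₀ a₁ a₂ α β' γ')
    (hcode : hermiteCode p (padicValInt p lam) a₀ a₁ a₂ α β γ =
      hermiteCode p (padicValInt p lam) a₀ a₁ a₂ α β' γ') :
    I = I' := by
  have hp := (Fact.out : p.Prime).one_lt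
  have hdet {z z' : ℤ} (hd : (p : ℤ) ^ a₂ ∣ lam * (z - z'))
      (hq : z / (p : ℤ) ^ (a₂ - padicValInt p lam) = z' / (p : ℤ) ^ (a₂ - padicValInt p lam)) :
      z = z' :=
    Int.ext_ediv_modEq hq
      (Int.modEq_iff_dvd.2 (dvd_sub_comm.1 (Int.pow_sub_padicValInt_dvd_of_dvd_mul hlam hd)))
  simp only [hermiteCode, Prod.mk.injEq, true_and] at hcode
  obtain rfl : γ = γ' := hdet ((dvd_sub h.dvd_pow_add_lam_mul_γ
    h'.dvd_pow_add_lam_mul_γ).trans (dvd_of_eq (by ring))) hcode.2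
  obtain rfl : β = β' := hdet ((dvd_sub (h.dvd_α_add_lam_mul_β hp)
    (h'.dvd_α_add_lam_mul_β hp)).trans (dvd_of_eq (by ring))) hcode.1
  exact h.ideal_eq h'

end IsHermiteForm

theorem idealCount_le [Fact p.Prime] (hlam : lam ≠ 0) (l : ℕ) :
    idealCount (R lam) (p ^ l) ≤ p ^ (2 * padicValInt p lam) * (l + 1) ^ 3 * p ^ (l / 2) := by
  have hp := (Fact.out : p.Prime)
  calc idealCount (R lam) (p ^ l)
      ≤ (codeBox p (padicValInt p lam) l).card := by
        refine Set.ncard_le_card_of_forall_subsingleton (fun I x => ∃ a₀ a₁ a₂ α β γ,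
          IsHermiteForm p I a₀ a₁ a₂ α β γ ∧ x = hermiteCode p (padicValInt p lam) a₀ a₁ a₂ α β γ)
          (fun I hI => ?_) ?_
        · obtain ⟨a₀, a₁, a₂, α, β, γ, h⟩ := exists_isHermiteForm hp hI
          exact ⟨_, h.hermiteCode_mem_codeBox hp.one_lt _ hI, a₀, a₁, a₂, α, β, γ, h, rfl⟩
        · rintro x - I ⟨-, a₀, a₁, a₂, α, β, γ, h, rfl⟩ I' ⟨-, a₀', a₁', a₂', α', β', γ', h', hx⟩
          have hx' := hx
          simp only [hermiteCode, Prod.mk.injEq] at hx'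
          obtain ⟨⟨rfl, rfl, rfl⟩, rfl, -⟩ := hx'
          exact h.eq_of_hermiteCode_eq hlam h' hx
    _ = p ^ (2 * padicValInt p lam) * (l + 1) ^ 3 * p ^ (l / 2) := by
        rw [card_codeBox]
        ring

end XSqMulXSubC

theorem local_factor_lambda_dividing_summable_general (lam : ℤ) (hlam : lam ≠ 0)
    (p : ℕ) (hp : p.Prime) (σ : ℝ) (hσ : 1 / 2 < σ) :
    Summable (fun l : ℕ =>
      (idealCount
        (Polynomial ℤ ⧸ Ideal.span
          {(Polynomial.X : Polynomial ℤ) ^ 2 * (Polynomial.X - Polynomial.C lam)})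
        (p ^ l) : ℝ) * (p : ℝ) ^ (-(l : ℝ) * σ)) := by
  have : Fact p.Prime := ⟨hp⟩
  refine summable_mul_rpow_of_le_pow_half (C := (p : ℝ) ^ (2 * padicValInt p lam))
    (by exact_mod_cast hp.one_lt) (fun _ => by positivity) (fun l => ?_) hσ
  exact_mod_cast XSqMulXSubC.idealCount_le hlam l

/-- For `f = X²(X - λ)` and a prime `p ∣ λ`, the local factor
`∑_{l ≥ 0} a_R(p^l) p^{-lσ}` converges for every real `σ > 1/2`. -/
theorem local_factor_lambda_dividing_summable (lam : ℤ) (hlam : lam ≠ 0)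
    (p : ℕ) (hp : p.Prime) (hpl : (p : ℤ) ∣ lam) (σ : ℝ) (hσ : 1 / 2 < σ) :
    Summable (fun l : ℕ =>
      (idealCount
        (Polynomial ℤ ⧸ Ideal.span
          {(Polynomial.X : Polynomial ℤ) ^ 2 * (Polynomial.X - Polynomial.C lam)})
        (p ^ l) : ℝ) * (p : ℝ) ^ (-(l : ℝ) * σ)) :=
  local_factor_lambda_dividing_summable_general lam hlam p hp σ hσ
end
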